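/- arXiv:1912.03779 — 9 statements merged into one kernel-verified Lean document; each statement's English description precedes it below -/
import Mathlib

section
/- If A and B are nonempty compact subsets of ℝ with gap(A) ≤ diam(B), then gap(A + B) ≤ gap(B). -/
open Pointwise

/-- The length of the longest bounded interval complementary to `A`:
`gap A = min {ℓ ≥ 0 : A + [0,ℓ] is an interval}`. -/
noncomputable def gap (A : Set ℝ) : ℝ :=
  sInf {ℓ : ℝ | 0 ≤ ℓ ∧ (A + Set.Icc 0 ℓ).OrdConnected}

/-!
The set `C = B + [0, gap B]` is an interval `[c, d]` containing `B`, so `d - c ≥ diam B ≥ gap A`.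
Hence `(A + B) + [0, gap B] = A + [c, d]` is a translate of `A + [0, d - c]`, which is an interval
because `gap A ≤ d - c`. The one analytic point is that for compact `A` the infimum defining
`gap A` is attained.
-/

open Set

theorem Set.OrdConnected.add {𝕜 : Type*} [Field 𝕜] [LinearOrder 𝕜] [IsStrictOrderedRing 𝕜]
    {s t : Set 𝕜} (hs : s.OrdConnected) (ht : t.OrdConnected) : (s + t).OrdConnected :=
  convex_iff_ordConnected.mp <|
    (convex_iff_ordConnected.mpr hs).add (convex_iff_ordConnected.mpr ht)

section Gap

variable {A : Set ℝ} {ℓ ℓ' : ℝ}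

theorem mem_add_Icc_zero_iff {z : ℝ} : z ∈ A + Icc 0 ℓ ↔ ∃ a ∈ A, z - ℓ ≤ a ∧ a ≤ z := by
  constructor
  · rintro ⟨a, ha, t, ⟨ht0, htℓ⟩, rfl⟩
    exact ⟨a, ha, by linarith, by linarith⟩
  · rintro ⟨a, ha, hza, haz⟩
    exact ⟨a, ha, z - a, ⟨by linarith, by linarith⟩, by ring⟩

theorem ordConnected_add_Icc_zero_mono (hℓ : (A + Icc 0 ℓ).OrdConnected) (h0 : 0 ≤ ℓ)
    (hle : ℓ ≤ ℓ') : (A + Icc 0 ℓ').OrdConnected := by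
  have hsplit : Icc (0 : ℝ) ℓ' = Icc 0 ℓ + Icc 0 (ℓ' - ℓ) := by
    rw [Icc_add_Icc h0 (sub_nonneg.2 hle)]
    simp
  rw [hsplit, ← add_assoc]
  exact hℓ.add ordConnected_Icc

theorem gap_nonneg (A : Set ℝ) : 0 ≤ gap A :=
  Real.sInf_nonneg fun _ hℓ ↦ hℓ.1

theorem gap_le_of_ordConnected (h0 : 0 ≤ ℓ) (h : (A + Icc 0 ℓ).OrdConnected) : gap A ≤ ℓ :=
  csInf_le ⟨0, fun _ hℓ ↦ hℓ.1⟩ ⟨h0, h⟩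

namespace IsCompact

variable (hA : IsCompact A) (hAne : A.Nonempty)
include hA hAne

/-- Witness: `sInf A` for points up to `sSup A`, and `sSup A` beyond. -/
theorem ordConnected_add_Icc_sSup_sub_sInf : (A + Icc 0 (sSup A - sInf A)).OrdConnected := by
  refine ⟨fun x hx y hy z ⟨hxz, hzy⟩ ↦ mem_add_Icc_zero_iff.2 ?_⟩
  obtain ⟨a, ha, -, hax⟩ := mem_add_Icc_zero_iff.1 hx
  obtain ⟨b, hb, hyb, -⟩ := mem_add_Icc_zero_iff.1 hy
  have hinf_a : sInf A ≤ a := csInf_le hA.bddBelow ha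
  have hb_sup : b ≤ sSup A := le_csSup hA.bddAbove hb
  rcases le_or_gt z (sSup A) with hz | hz
  · exact ⟨sInf A, hA.sInf_mem hAne, by linarith, by linarith⟩
  · exact ⟨sSup A, hA.sSup_mem hAne, by linarith, hz.le⟩

theorem ordConnected_add_Icc_of_gap_lt (h : gap A < ℓ) : (A + Icc 0 ℓ).OrdConnected := by
  have hne : {ℓ : ℝ | 0 ≤ ℓ ∧ (A + Icc 0 ℓ).OrdConnected}.Nonempty :=
    ⟨_, sub_nonneg.2 (csInf_le_csSup hAne hA.bddBelow hA.bddAbove),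
      hA.ordConnected_add_Icc_sSup_sub_sInf hAne⟩
  obtain ⟨ℓ₀, ⟨h0, hℓ₀⟩, hlt⟩ := exists_lt_of_csInf_lt hne h
  exact ordConnected_add_Icc_zero_mono hℓ₀ h0 hlt.le

/-- For `z` between two points of `A + [0, gap A]`, the largest point of `A` below `z` lies
within `ℓ` of `z` for every `ℓ > gap A`. -/
theorem ordConnected_add_Icc_gap : (A + Icc 0 (gap A)).OrdConnected := by
  refine ⟨fun x hx y hy z hz ↦ mem_add_Icc_zero_iff.2 ?_⟩
  set T := A ∩ Iic z
  have hT : IsCompact T := hA.inter_right isClosed_Iic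
  have hTne : T.Nonempty := by
    obtain ⟨a, ha, -, hax⟩ := mem_add_Icc_zero_iff.1 hx
    exact ⟨a, ha, hax.trans hz.1⟩
  obtain ⟨haA, haz⟩ : sSup T ∈ T := hT.sSup_mem hTne
  refine ⟨sSup T, haA, ?_, haz⟩
  have hclose : ∀ ℓ, gap A < ℓ → z - ℓ ≤ sSup T := by
    intro ℓ hℓ
    have hsub : A + Icc 0 (gap A) ⊆ A + Icc 0 ℓ :=
      add_subset_add_left (Icc_subset_Icc_right hℓ.le)
    have hzℓ : z ∈ A + Icc 0 ℓ :=
      (hA.ordConnected_add_Icc_of_gap_lt hAne hℓ).out (hsub hx) (hsub hy) hz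
    obtain ⟨a, ha, hza, haz⟩ := mem_add_Icc_zero_iff.1 hzℓ
    exact hza.trans (le_csSup hT.bddAbove ⟨ha, haz⟩)
  have : z - sSup T ≤ gap A :=
    le_of_forall_gt_imp_ge_of_dense fun ℓ hℓ ↦ by linarith [hclose ℓ hℓ]
  linarith

theorem ordConnected_add_Icc_of_gap_le_sub {c d : ℝ} (hcd : c ≤ d) (h : gap A ≤ d - c) :
    (A + Icc c d).OrdConnected := by
  have hshift : Icc c d = Icc 0 (d - c) + Icc c c := by
    rw [Icc_add_Icc (sub_nonneg.2 hcd) le_rfl]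
    simp
  rw [hshift, ← add_assoc]
  exact (ordConnected_add_Icc_zero_mono (hA.ordConnected_add_Icc_gap hAne) (gap_nonneg A) h).add
    ordConnected_Icc

end IsCompact

end Gap

theorem gap_add_le (A B : Set ℝ) (hA : IsCompact A) (hAne : A.Nonempty)
    (hB : IsCompact B) (hBne : B.Nonempty) (h : gap A ≤ Metric.diam B) :
    gap (A + B) ≤ gap B := by
  set C := B + Icc 0 (gap B) with hC_def
  have hC : IsCompact C := hB.add isCompact_Icc
  have hBC : B ⊆ C := fun b hb ↦ ⟨b, hb, 0, ⟨le_rfl, gap_nonneg B⟩, add_zero b⟩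
  have hCne : C.Nonempty := hBne.mono hBC
  have hC_eq : C = Icc (sInf C) (sSup C) :=
    eq_Icc_csInf_csSup_of_connected_bdd_closed
      ⟨hCne, isPreconnected_iff_ordConnected.2 (hB.ordConnected_add_Icc_gap hBne)⟩
      hC.bddBelow hC.bddAbove hC.isClosed
  have hcd : sInf C ≤ sSup C := csInf_le_csSup hCne hC.bddBelow hC.bddAbove
  have hdiam : Metric.diam B ≤ sSup C - sInf C := by
    rw [← Real.diam_Icc hcd, ← hC_eq]
    exact Metric.diam_mono hBC hC.isBounded
  apply gap_le_of_ordConnected (gap_nonneg B)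
  rw [add_assoc, ← hC_def, hC_eq]
  exact hA.ordConnected_add_Icc_of_gap_le_sub hAne hcd (h.trans hdiam)
end

section
/- The map gap : 𝒦(ℝ) → ℝ assigning to each nonempty compact set A the quantity gap(A) = min{ℓ ≥ 0 : A + [0,ℓ] is an interval} is continuous with respect to the Hausdorff metric. -/
open Pointwise

/-!
If every point of `B` is within `ε` of `A` and vice versa, and `A + [0, ℓ]` is an interval, then so
is `B + [0, ℓ + 2ε]`: if `z` lies between `b₁ + [0, ℓ + 2ε]` and `b₂ + [0, ℓ + 2ε]` but in neither,
then `z - ε` lies between points of `A` near `b₁` and `b₂`, hence in `a + [0, ℓ]` for some `a ∈ A`,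
and a point of `B` near `a` puts `z` into `B + [0, ℓ + 2ε]`. So `gap` is `2`-Lipschitz for the
Hausdorff distance.
-/

open Set Metric TopologicalSpace

lemma mem_add_Icc_iff {A : Set ℝ} {ℓ x : ℝ} : x ∈ A + Icc 0 ℓ ↔ ∃ a ∈ A, a ≤ x ∧ x ≤ a + ℓ := by
  simp only [mem_add, mem_Icc]
  constructor
  · rintro ⟨a, ha, t, ⟨ht0, htℓ⟩, rfl⟩
    exact ⟨a, ha, by linarith, by linarith⟩
  · rintro ⟨a, ha, hax, hxa⟩
    exact ⟨a, ha, x - a, ⟨by linarith, by linarith⟩, by ring⟩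

lemma ordConnected_add_Icc_sub {A : Set ℝ} {a b : ℝ} (ha : IsLeast A a) (hb : IsGreatest A b) :
    (A + Icc 0 (b - a)).OrdConnected := by
  refine ⟨fun x hx y hy z ⟨hxz, hzy⟩ => ?_⟩
  obtain ⟨a₁, ha₁, hax, -⟩ := mem_add_Icc_iff.1 hx
  obtain ⟨b₁, hb₁, -, hyb⟩ := mem_add_Icc_iff.1 hy
  have := ha.2 ha₁
  have := hb.2 hb₁
  refine mem_add_Icc_iff.2 ?_
  rcases le_total z b with hzb | hbz
  · exact ⟨a, ha.1, by linarith, by linarith⟩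
  · exact ⟨b, hb.1, hbz, by linarith⟩

lemma IsCompact.exists_ordConnected_add_Icc {A : Set ℝ} (hAc : IsCompact A) (hA : A.Nonempty) :
    ∃ ℓ, 0 ≤ ℓ ∧ (A + Icc 0 ℓ).OrdConnected :=
  ⟨sSup A - sInf A, sub_nonneg.2 (csInf_le_csSup hA hAc.bddBelow hAc.bddAbove),
    ordConnected_add_Icc_sub (hAc.isLeast_sInf hA) (hAc.isGreatest_sSup hA)⟩

lemma Set.OrdConnected.add_Icc_add_two_mul {A B : Set ℝ} {ε ℓ : ℝ} (hℓ : 0 ≤ ℓ)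
    (hBA : ∀ b ∈ B, ∃ a ∈ A, dist a b ≤ ε) (hAB : ∀ a ∈ A, ∃ b ∈ B, dist a b ≤ ε)
    (hA : (A + Icc 0 ℓ).OrdConnected) :
    (B + Icc 0 (ℓ + 2 * ε)).OrdConnected := by
  refine ⟨fun x hx y hy z ⟨hxz, hzy⟩ => mem_add_Icc_iff.2 ?_⟩
  obtain ⟨b₁, hb₁, hb₁x, -⟩ := mem_add_Icc_iff.1 hx
  obtain ⟨b₂, hb₂, -, hyb₂⟩ := mem_add_Icc_iff.1 hy
  by_cases hzb₁ : z ≤ b₁ + (ℓ + 2 * ε)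
  · exact ⟨b₁, hb₁, by linarith, hzb₁⟩
  by_cases hb₂z : b₂ ≤ z
  · exact ⟨b₂, hb₂, hb₂z, by linarith⟩
  obtain ⟨a₁, ha₁, hab₁⟩ := hBA b₁ hb₁
  obtain ⟨a₂, ha₂, hab₂⟩ := hBA b₂ hb₂
  rw [Real.dist_eq, abs_le] at hab₁ hab₂
  have hz : z - ε ∈ A + Icc 0 ℓ :=
    hA.out (mem_add_Icc_iff.2 ⟨a₁, ha₁, le_rfl, by linarith⟩)
      (mem_add_Icc_iff.2 ⟨a₂, ha₂, le_rfl, by linarith⟩) ⟨by linarith, by linarith⟩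
  obtain ⟨a, ha, haz, hza⟩ := mem_add_Icc_iff.1 hz
  obtain ⟨b, hb, hab⟩ := hAB a ha
  rw [Real.dist_eq, abs_le] at hab
  exact ⟨b, hb, by linarith, by linarith⟩

lemma gap_le {A : Set ℝ} {ℓ : ℝ} (hℓ : 0 ≤ ℓ) (hA : (A + Icc 0 ℓ).OrdConnected) : gap A ≤ ℓ :=
  csInf_le ⟨0, fun _ h => h.1⟩ ⟨hℓ, hA⟩

lemma gap_le_gap_add_two_mul {A B : Set ℝ} (hAc : IsCompact A) (hA : A.Nonempty) {ε : ℝ}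
    (hBA : ∀ b ∈ B, ∃ a ∈ A, dist a b ≤ ε) (hAB : ∀ a ∈ A, ∃ b ∈ B, dist a b ≤ ε) :
    gap B ≤ gap A + 2 * ε := by
  rw [← sub_le_iff_le_add]
  obtain ⟨ℓ₀, hℓ₀⟩ := hAc.exists_ordConnected_add_Icc hA
  refine le_csInf ⟨ℓ₀, hℓ₀⟩ fun ℓ ⟨hℓ, hAℓ⟩ => sub_le_iff_le_add.2 ?_
  obtain ⟨a, ha⟩ := hA
  obtain ⟨b, -, hab⟩ := hAB a ha
  have hε : 0 ≤ ε := dist_nonneg.trans hab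
  exact gap_le (by positivity) (hAℓ.add_Icc_add_two_mul hℓ hBA hAB)

lemma TopologicalSpace.NonemptyCompacts.exists_dist_lt_of_dist_lt {α : Type*} [MetricSpace α]
    {A B : NonemptyCompacts α} {r : ℝ} (h : dist A B < r) {a : α} (ha : a ∈ A) :
    ∃ b ∈ B, dist a b < r :=
  exists_dist_lt_of_hausdorffDist_lt ha (Metric.NonemptyCompacts.dist_eq (x := A) ▸ h)
    (hausdorffEDist_ne_top_of_nonempty_of_bounded A.nonempty B.nonempty
      A.isCompact.isBounded B.isCompact.isBounded)

lemma gap_le_gap_add_two_mul_dist (A B : NonemptyCompacts ℝ) :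
    gap B ≤ gap A + 2 * dist B A := by
  refine le_of_forall_pos_le_add fun δ hδ => ?_
  have hr : dist B A < dist B A + δ / 2 := by linarith
  have hBA : ∀ b ∈ (B : Set ℝ), ∃ a ∈ (A : Set ℝ), dist a b ≤ dist B A + δ / 2 := fun b hb =>
    (NonemptyCompacts.exists_dist_lt_of_dist_lt hr hb).imp
      fun a ⟨ha, h⟩ => ⟨ha, (dist_comm a b ▸ h).le⟩
  have hAB : ∀ a ∈ (A : Set ℝ), ∃ b ∈ (B : Set ℝ), dist a b ≤ dist B A + δ / 2 := fun a ha =>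
    (NonemptyCompacts.exists_dist_lt_of_dist_lt (dist_comm A B ▸ hr) ha).imp
      fun b ⟨hb, h⟩ => ⟨hb, h.le⟩
  linarith [gap_le_gap_add_two_mul A.isCompact A.nonempty hBA hAB]

lemma lipschitzWith_gap : LipschitzWith 2 (fun A : NonemptyCompacts ℝ => gap (A : Set ℝ)) :=
  LipschitzWith.of_le_add_mul 2 fun B A => by
    simpa using gap_le_gap_add_two_mul_dist A B

theorem gap_continuous :
    Continuous (fun A : TopologicalSpace.NonemptyCompacts ℝ => gap (A : Set ℝ)) :=
  lipschitzWith_gap.continuous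
end

section
/- If A₀, A₁, … are nonempty compact subsets of ℝ whose infinite Minkowski sum Σᵢ Aᵢ exists in the Hausdorff metric, then diam(Aᵢ) → 0 as i → ∞. -/
/-!
On `ℝ` the diameter is additive on Minkowski sums of bounded nonempty sets
(`sup` and `inf` are), and in any metric space it is `2`-Lipschitz for the Hausdorff distance.
Hence the diameters of the partial sums `Pₙ` converge to `diam S`, and
`diam Aₙ₊₁ = diam Pₙ₊₁ - diam Pₙ → diam S - diam S = 0`.
-/

open Pointwise

open Bornology Filter Metric Topology

lemma Metric.diam_le_diam_add_two_mul_hausdorffDist {X : Type*} [PseudoMetricSpace X]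
    {s t : Set X} (ht : IsBounded t) (fin : hausdorffEDist s t ≠ ⊤) :
    diam s ≤ diam t + 2 * hausdorffDist s t := by
  have hC : 0 ≤ diam t + 2 * hausdorffDist s t :=
    add_nonneg diam_nonneg (mul_nonneg zero_le_two hausdorffDist_nonneg)
  refine diam_le_of_forall_dist_le hC fun x hx y hy => ?_
  refine le_of_forall_pos_lt_add fun ε hε => ?_
  have hlt : hausdorffDist s t < hausdorffDist s t + ε / 2 := by linarith
  obtain ⟨x', hx', hxx'⟩ := exists_dist_lt_of_hausdorffDist_lt hx hlt fin
  obtain ⟨y', hy', hyy'⟩ := exists_dist_lt_of_hausdorffDist_lt hy hlt fin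
  calc dist x y ≤ dist x x' + dist x' y' + dist y' y := dist_triangle4 x x' y' y
    _ < diam t + 2 * hausdorffDist s t + ε := by
      linarith [dist_le_diam_of_mem ht hx' hy', dist_comm y y']

lemma Metric.abs_diam_sub_diam_le_two_mul_hausdorffDist {X : Type*} [PseudoMetricSpace X]
    {s t : Set X} (hs : IsBounded s) (ht : IsBounded t) (fin : hausdorffEDist s t ≠ ⊤) :
    |diam s - diam t| ≤ 2 * hausdorffDist s t := by
  have hst := diam_le_diam_add_two_mul_hausdorffDist ht fin
  have hts := diam_le_diam_add_two_mul_hausdorffDist hs (hausdorffEDist_comm.trans_ne fin)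
  rw [hausdorffDist_comm] at hts
  exact abs_sub_le_iff.2 ⟨by linarith, by linarith⟩

lemma Metric.tendsto_diam_of_tendsto_hausdorffDist {X ι : Type*} [PseudoMetricSpace X]
    {l : Filter ι} {s : ι → Set X} {t : Set X} (hs : ∀ i, IsBounded (s i)) (ht : IsBounded t)
    (fin : ∀ i, hausdorffEDist (s i) t ≠ ⊤)
    (h : Tendsto (fun i => hausdorffDist (s i) t) l (𝓝 0)) :
    Tendsto (fun i => diam (s i)) l (𝓝 (diam t)) := by
  rw [tendsto_iff_dist_tendsto_zero]
  refine squeeze_zero (fun i => dist_nonneg) (fun i => ?_) (by simpa using h.const_mul 2)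
  exact (Real.dist_eq _ _).trans_le (abs_diam_sub_diam_le_two_mul_hausdorffDist (hs i) ht (fin i))

lemma Real.diam_add {s t : Set ℝ} (hs : s.Nonempty) (ht : t.Nonempty) (hsb : IsBounded s)
    (htb : IsBounded t) : diam (s + t) = diam s + diam t := by
  rw [Real.diam_eq (hsb.add htb), Real.diam_eq hsb, Real.diam_eq htb,
    csSup_add hs hsb.bddAbove ht htb.bddAbove, csInf_add hs hsb.bddBelow ht htb.bddBelow]
  ring

lemma Bornology.IsBounded.finsetSum {E ι : Type*} [SeminormedAddCommGroup E] {A : ι → Set E}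
    (t : Finset ι) (h : ∀ i ∈ t, IsBounded (A i)) : IsBounded (∑ i ∈ t, A i) :=
  Finset.sum_induction A IsBounded (fun _ _ => IsBounded.add) isBounded_singleton h

lemma Set.Nonempty.finsetSum {M ι : Type*} [AddCommMonoid M] {A : ι → Set M}
    (t : Finset ι) (h : ∀ i ∈ t, (A i).Nonempty) : (∑ i ∈ t, A i).Nonempty :=
  Finset.sum_induction A Set.Nonempty (fun _ _ => Set.Nonempty.add) Set.zero_nonempty h

theorem diam_tendsto_zero_of_minkowski_tsum (A : ℕ → Set ℝ)
    (hcomp : ∀ i, IsCompact (A i)) (hne : ∀ i, (A i).Nonempty)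
    (S : Set ℝ) (hS : IsCompact S) (hSne : S.Nonempty)
    (hlim : Filter.Tendsto
      (fun n => Metric.hausdorffDist (∑ i ∈ Finset.range (n + 1), A i) S)
      Filter.atTop (nhds 0)) :
    Filter.Tendsto (fun i => Metric.diam (A i)) Filter.atTop (nhds 0) := by
  set P : ℕ → Set ℝ := fun n => ∑ i ∈ Finset.range (n + 1), A i
  have hP_bdd (n : ℕ) : IsBounded (P n) := .finsetSum _ fun i _ => (hcomp i).isBounded
  have hP_ne (n : ℕ) : (P n).Nonempty := .finsetSum _ fun i _ => hne i
  have hdiam : Tendsto (fun n => diam (P n)) atTop (𝓝 (diam S)) :=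
    tendsto_diam_of_tendsto_hausdorffDist hP_bdd hS.isBounded
      (fun n => hausdorffEDist_ne_top_of_nonempty_of_bounded (hP_ne n) hSne (hP_bdd n)
        hS.isBounded) hlim
  have hstep (n : ℕ) : diam (A (n + 1)) = diam (P (n + 1)) - diam (P n) := by
    rw [show P (n + 1) = P n + A (n + 1) from Finset.sum_range_succ A (n + 1),
      Real.diam_add (hP_ne n) (hne _) (hP_bdd n) (hcomp _).isBounded]
    ring
  rw [← tendsto_add_atTop_iff_nat 1]
  simpa [hstep] using (hdiam.comp (tendsto_add_atTop_nat 1)).sub hdiam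
end

section
/- For real numbers 0 < p < q ≤ 1, an integer i ≥ 1, and a ∈ ℝ, the set Aᵢ = a · {p,q}^{⊙i} (the scaled i-fold Minkowski product of {p,q}) satisfies diam(Aᵢ) = |a|·(qⁱ − pⁱ) and gap(Aᵢ) = |a|·(q−p)·q^{i−1}. -/
/-!
Listed increasingly, `{p, q} ^ i` is the chain `p ^ (i - j) * q ^ j` (`0 ≤ j ≤ i`), whose
consecutive differences `(q - p) * p ^ (i - j - 1) * q ^ j` are largest for `j = i - 1`.
For an increasing finite chain, `A + [0, ℓ]` is an interval exactly when `ℓ` is at least every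
consecutive difference, so `gap` is the largest one. Both `diam` and `gap` scale by `|a|`;
for `gap` the sign of `a` is harmless because `-A + [0, ℓ]` is the reflection `x ↦ ℓ - x`
of `A + [0, ℓ]`.
-/

open Pointwise

open Set

theorem Nat.Iic_succ_eq_union_image (n : ℕ) : Iic (n + 1) = Iic n ∪ (· + 1) '' Iic n := by
  ext (_ | j) <;> simp; omega

theorem Set.pair_pow_eq_image {M : Type*} [CommMonoid M] (p q : M) (i : ℕ) :
    ({p, q} : Set M) ^ i = (fun j => p ^ (i - j) * q ^ j) '' Iic i := by
  induction i with
  | zero =>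
    ext; simp [eq_comm]
  | succ n ih =>
    rw [pow_succ, ih, insert_eq, mul_union, mul_singleton, mul_singleton, image_image,
      image_image, Nat.Iic_succ_eq_union_image, image_union, image_image]
    congr 1
    · refine image_congr fun j hj => ?_
      rw [Nat.sub_add_comm (mem_Iic.1 hj), pow_succ, mul_right_comm]
    · simp only [Nat.add_sub_add_right, pow_succ, mul_assoc]

theorem gap_singleton (x : ℝ) : gap {x} = 0 := by
  refine IsLeast.csInf_eq ⟨⟨le_rfl, ?_⟩, fun _ h => h.1⟩
  simp [ordConnected_singleton]

theorem Set.OrdConnected.smul₀ {T : Set ℝ} (hT : T.OrdConnected) (c : ℝ) :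
    (c • T).OrdConnected := by
  rw [← image_smul, ← isPreconnected_iff_ordConnected]
  exact (isPreconnected_iff_ordConnected.2 hT).image _ (continuous_const_smul c).continuousOn

theorem ordConnected_smul_iff {T : Set ℝ} {c : ℝ} (hc : c ≠ 0) :
    (c • T).OrdConnected ↔ T.OrdConnected :=
  ⟨fun h => by simpa [inv_smul_smul₀ hc] using h.smul₀ c⁻¹, fun h => h.smul₀ c⟩

theorem gap_smul_of_pos {c : ℝ} (hc : 0 < c) (A : Set ℝ) : gap (c • A) = c * gap A := by
  rw [gap, gap, ← smul_eq_mul, ← Real.sInf_smul_of_nonneg hc.le]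
  congr 1
  ext ℓ
  have hscale : c • A + Icc 0 ℓ = c • (A + Icc 0 (c⁻¹ * ℓ)) := by
    rw [smul_add, LinearOrderedField.smul_Icc hc, mul_zero, mul_inv_cancel_left₀ hc.ne']
  rw [mem_smul_set_iff_inv_smul_mem₀ hc.ne', mem_ofPred_eq, mem_ofPred_eq, hscale,
    ordConnected_smul_iff hc.ne', smul_eq_mul, mul_nonneg_iff_of_pos_left (inv_pos.2 hc)]

theorem neg_add_Icc_eq_preimage (A : Set ℝ) (ℓ : ℝ) :
    -A + Icc 0 ℓ = (ℓ - ·) ⁻¹' (A + Icc 0 ℓ) := by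
  ext x
  simp only [mem_add, mem_neg, mem_preimage, mem_Icc]
  constructor
  · rintro ⟨a, ha, s, hs, rfl⟩
    exact ⟨-a, ha, ℓ - s, ⟨by linarith, by linarith⟩, by ring⟩
  · rintro ⟨a, ha, s, hs, h⟩
    exact ⟨-a, by rwa [neg_neg], ℓ - s, ⟨by linarith, by linarith⟩, by linarith⟩

theorem Set.OrdConnected.neg_add_Icc {A : Set ℝ} {ℓ : ℝ} (h : (A + Icc 0 ℓ).OrdConnected) :
    (-A + Icc 0 ℓ).OrdConnected := by
  rw [neg_add_Icc_eq_preimage]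
  exact h.preimage_anti fun _ _ hxy => sub_le_sub_left hxy ℓ

theorem gap_neg (A : Set ℝ) : gap (-A) = gap A := by
  rw [gap, gap]
  congr 1
  ext ℓ
  exact and_congr_right fun _ => ⟨fun h => by simpa using h.neg_add_Icc, .neg_add_Icc⟩

theorem gap_smul {A : Set ℝ} (hA : A.Nonempty) (c : ℝ) : gap (c • A) = |c| * gap A := by
  rcases lt_trichotomy c 0 with hc | rfl | hc
  · rw [abs_of_neg hc, ← gap_smul_of_pos (neg_pos.2 hc), neg_smul_set, gap_neg]
  · rw [zero_smul_set hA, abs_zero, zero_mul]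
    exact gap_singleton 0
  · rw [abs_of_pos hc, gap_smul_of_pos hc]

section Chain

variable {m : ℕ → ℝ} {n : ℕ} {g : ℝ}

theorem diam_image_Iic_of_monotoneOn (hm : MonotoneOn m (Iic n)) :
    Metric.diam (m '' Iic n) = m n - m 0 := by
  have h0 : 0 ∈ Iic n := Nat.zero_le n
  have hn : n ∈ Iic n := le_refl n
  have hsub : m '' Iic n ⊆ Icc (m 0) (m n) :=
    image_subset_iff.2 fun j hj => ⟨hm h0 hj (Nat.zero_le j), hm hj hn hj⟩
  have hbdd : Bornology.IsBounded (m '' Iic n) := (Metric.isBounded_Icc _ _).subset hsub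
  refine le_antisymm ?_ ?_
  · exact (Metric.diam_mono hsub (Metric.isBounded_Icc _ _)).trans
      (Real.diam_Icc (hm h0 hn (Nat.zero_le n))).le
  · exact (le_abs_self _).trans
      (Metric.dist_le_diam_of_mem hbdd (mem_image_of_mem m hn) (mem_image_of_mem m h0))

theorem image_Iic_add_Icc (hm : MonotoneOn m (Iic n)) (hg : ∀ j < n, m (j + 1) ≤ m j + g)
    (hg0 : 0 ≤ g) : m '' Iic n + Icc 0 g = Icc (m 0) (m n + g) := by
  induction n with
  | zero =>
    rw [← bot_eq_zero, Iic_bot, image_singleton, singleton_add, image_const_add_Icc, add_zero]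
  | succ n ih =>
    have hm' : MonotoneOn m (Iic n) := hm.mono (Iic_subset_Iic.2 n.le_succ)
    have hstep := hg n n.lt_succ_self
    have h0 : m 0 ≤ m (n + 1) := hm (Nat.zero_le _) (le_refl (n + 1)) (Nat.zero_le _)
    have hmn : m n ≤ m (n + 1) := hm n.le_succ (le_refl (n + 1)) n.le_succ
    rw [← Order.succ_eq_add_one, Order.Iic_succ, Order.succ_eq_add_one, image_insert_eq,
      insert_eq, union_add, singleton_add, image_const_add_Icc, add_zero,
      ih hm' fun j hj => hg j (hj.trans n.lt_succ_self), Icc_union_Icc' (by linarith) hstep,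
      min_eq_right h0, max_eq_left (add_le_add_left hmn g)]

theorem not_ordConnected_image_Iic_add_Icc (hm : MonotoneOn m (Iic n)) {k : ℕ} (hk : k < n)
    {b : ℝ} (hb0 : 0 ≤ b) (hb : b < m (k + 1) - m k) :
    ¬ (m '' Iic n + Icc 0 b).OrdConnected := by
  intro hconn
  have hk' : k ∈ Iic n := hk.le
  have hk1 : k + 1 ∈ Iic n := hk
  have mem (j : ℕ) (hj : j ∈ Iic n) : m j ∈ m '' Iic n + Icc 0 b :=
    ⟨m j, mem_image_of_mem m hj, 0, ⟨le_rfl, hb0⟩, add_zero _⟩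
  -- This point lies strictly between `m k + b` and `m (k + 1)`, so it is missed by the thickening.
  obtain ⟨_, ⟨j, hj, rfl⟩, s, hs, hsum⟩ :=
    hconn.out (mem k hk') (mem (k + 1) hk1)
      (show (m k + b + m (k + 1)) / 2 ∈ Icc (m k) (m (k + 1)) from ⟨by linarith, by linarith⟩)
  have hkj : k + 1 ≤ j := by
    by_contra! hjk
    linarith [hs.2, hm hj hk' (Nat.le_of_lt_succ hjk)]
  linarith [hs.1, hm hk1 hj hkj]

theorem gap_image_Iic (hm : MonotoneOn m (Iic n)) (hg : ∀ j < n, m (j + 1) ≤ m j + g)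
    {k : ℕ} (hk : k < n) (hkg : m (k + 1) = m k + g) : gap (m '' Iic n) = g := by
  have hg0 : 0 ≤ g := by linarith [hm (show k ∈ Iic n from hk.le) hk k.le_succ]
  refine IsLeast.csInf_eq ⟨⟨hg0, ?_⟩, fun b ⟨hb0, hb⟩ => not_lt.1 fun hbg => ?_⟩
  · rw [image_Iic_add_Icc hm hg hg0]
    exact ordConnected_Icc
  · exact not_ordConnected_image_Iic_add_Icc hm hk hb0 (by linarith) hb

end Chain

theorem pow_sub_succ_mul_pow_succ {R : Type*} [CommRing R] (p q : R) {i j : ℕ} (hj : j < i) :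
    p ^ (i - (j + 1)) * q ^ (j + 1) =
      p ^ (i - j) * q ^ j + (q - p) * (p ^ (i - (j + 1)) * q ^ j) := by
  rw [show i - j = i - (j + 1) + 1 by omega, pow_succ, pow_succ]
  ring

section PairPowEnumeration

variable {p q : ℝ} (hp : 0 ≤ p) (hpq : p ≤ q)
include hp hpq

theorem monotoneOn_pow_sub_mul_pow (i : ℕ) :
    MonotoneOn (fun j => p ^ (i - j) * q ^ j) (Iic i) :=
  monotoneOn_of_le_add_one ordConnected_Iic fun j _ _ hj => by
    rw [pow_sub_succ_mul_pow_succ p q hj]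
    exact le_add_of_nonneg_right
      (mul_nonneg (sub_nonneg.2 hpq) (mul_nonneg (pow_nonneg hp _) (pow_nonneg (hp.trans hpq) _)))

theorem pow_sub_succ_mul_pow_succ_le {i j : ℕ} (hj : j < i) :
    p ^ (i - (j + 1)) * q ^ (j + 1) ≤ p ^ (i - j) * q ^ j + (q - p) * q ^ (i - 1) := by
  have hq : 0 ≤ q := hp.trans hpq
  rw [pow_sub_succ_mul_pow_succ p q hj, show i - 1 = i - (j + 1) + j by omega, pow_add]
  gcongr

end PairPowEnumeration

theorem diam_gap_scaled_pair_pow_general (p q : ℝ) (hp : 0 < p) (hpq : p < q)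
    (i : ℕ) (hi : 1 ≤ i) (a : ℝ) :
    Metric.diam (a • (({p, q} : Set ℝ) ^ i)) = |a| * (q ^ i - p ^ i) ∧
    gap (a • (({p, q} : Set ℝ) ^ i)) = |a| * (q - p) * q ^ (i - 1) := by
  have hmono := monotoneOn_pow_sub_mul_pow hp.le hpq.le i
  have hne : (({p, q} : Set ℝ) ^ i).Nonempty := (insert_nonempty p {q}).pow
  obtain ⟨k, rfl⟩ : ∃ k, i = k + 1 := ⟨i - 1, by omega⟩
  have hlast :
      p ^ (k + 1 - (k + 1)) * q ^ (k + 1) = p ^ (k + 1 - k) * q ^ k + (q - p) * q ^ k := by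
    simp only [Nat.sub_self, Nat.add_sub_cancel_left]
    ring
  constructor
  · rw [diam_smul₀, Real.norm_eq_abs, pair_pow_eq_image, diam_image_Iic_of_monotoneOn hmono]
    simp
  · rw [gap_smul hne, pair_pow_eq_image,
      gap_image_Iic hmono (fun _ hj => pow_sub_succ_mul_pow_succ_le hp.le hpq.le hj)
        k.lt_succ_self hlast,
      Nat.add_sub_cancel, mul_assoc]

theorem diam_gap_scaled_pair_pow (p q : ℝ) (hp : 0 < p) (hpq : p < q) (hq : q ≤ 1)
    (i : ℕ) (hi : 1 ≤ i) (a : ℝ) :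
    Metric.diam (a • (({p, q} : Set ℝ) ^ i)) = |a| * (q ^ i - p ^ i) ∧
    gap (a • (({p, q} : Set ℝ) ^ i)) = |a| * (q - p) * q ^ (i - 1) :=
  diam_gap_scaled_pair_pow_general p q hp hpq i hi a
end

section
/- Let f(x) = Σ_{i≥0} aᵢxⁱ be a power series with Σᵢ|aᵢ| < ∞, and suppose there is ε > 0 with |a_{i+1}|/|aᵢ| > ε for all but finitely many i. If 0 < p < q ≤ 1 and (q−p)/q² < ε, then the set f({p,q}) := Σ_{i≥0} aᵢ·{p,q}^{⊙i} (infinite Minkowski sum, converging in the Hausdorff metric) has nonempty interior. -/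
open Pointwise

/-!
The set `{p,q}^i` contains `p^i` and `q^i`, and since `{p,q}^(i+1) = p•{p,q}^i ∪ q•{p,q}^i`, every
interval of length `q^(i-1)(q-p)` between them meets it. So `aᵢ•{p,q}^i` has extreme points
`mᵢ ≤ Mᵢ`, with `Mᵢ - mᵢ = |aᵢ|(q^i - p^i)`, and gaps at most `|aᵢ| q^(i-1)(q-p)`. The ratio
hypothesis and `(q-p)/q² < ε` make this gap at most `M_{i+1} - m_{i+1}` for all `i ≥ N`. Choosing
the summands greedily, every point of `[Σ_{i≥N} mᵢ, Σ_{i≥N} Mᵢ]`, shifted by a point of the first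
`N` summands, is a limit of points of the partial Minkowski sums, so this nondegenerate interval
lies in the Hausdorff limit `F`.
-/

open Set Filter Topology Metric Bornology

structure GapBounded (S : Set ℝ) (m M g : ℝ) : Prop where
  left_mem : m ∈ S
  right_mem : M ∈ S
  nonempty_inter_Icc : ∀ u, m ≤ u → u + g ≤ M → (S ∩ Icc u (u + g)).Nonempty

namespace GapBounded

variable {S T : Set ℝ} {m M m' M' g g' : ℝ}

theorem mono (h : GapBounded S m M g) (hg : g ≤ g') : GapBounded S m M g' where
  left_mem := h.left_mem
  right_mem := h.right_mem
  nonempty_inter_Icc u hu hu' :=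
    (h.nonempty_inter_Icc u hu (by linarith)).mono
      (inter_subset_inter_right _ (Icc_subset_Icc_right (by linarith)))

theorem union (hS : GapBounded S m M g) (hT : GapBounded T m' M' g) (hgap : m' ≤ M + g) :
    GapBounded (S ∪ T) m M' g where
  left_mem := Or.inl hS.left_mem
  right_mem := Or.inr hT.right_mem
  nonempty_inter_Icc u hu hu' := by
    by_cases h₁ : m' ≤ u
    · exact (hT.nonempty_inter_Icc u h₁ hu').mono (inter_subset_inter_left _ subset_union_right)
    by_cases h₂ : u + g ≤ M
    · exact (hS.nonempty_inter_Icc u hu h₂).mono (inter_subset_inter_left _ subset_union_left)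
    by_cases h₃ : u ≤ M
    · exact ⟨M, Or.inl hS.right_mem, h₃, by linarith⟩
    · exact ⟨m', Or.inr hT.left_mem, by linarith, by linarith⟩

theorem neg (h : GapBounded S m M g) : GapBounded (-S) (-M) (-m) g where
  left_mem := by simpa using h.right_mem
  right_mem := by simpa using h.left_mem
  nonempty_inter_Icc u hu hu' := by
    obtain ⟨x, hxS, hx⟩ := h.nonempty_inter_Icc (-(u + g)) (by linarith) (by linarith)
    exact ⟨-x, by simpa using hxS, by linarith [hx.2], by linarith [hx.1]⟩

theorem smul_of_nonneg (h : GapBounded S m M g) {a : ℝ} (ha : 0 ≤ a) :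
    GapBounded (a • S) (a * m) (a * M) (a * g) where
  left_mem := smul_mem_smul_set h.left_mem
  right_mem := smul_mem_smul_set h.right_mem
  nonempty_inter_Icc u hu hu' := by
    rcases ha.eq_or_lt with rfl | ha
    · exact ⟨0 * m, smul_mem_smul_set h.left_mem, by linarith, by linarith⟩
    obtain ⟨x, hxS, hx⟩ := h.nonempty_inter_Icc (u / a) ((le_div_iff₀ ha).2 (by linarith))
      (by rw [div_add' _ _ _ ha.ne', div_le_iff₀ ha]; linarith)
    refine ⟨a * x, smul_mem_smul_set hxS, (div_le_iff₀' ha).1 hx.1, ?_⟩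
    calc a * x ≤ a * (u / a + g) := mul_le_mul_of_nonneg_left hx.2 ha.le
      _ = u + a * g := by field_simp

theorem smul (h : GapBounded S m M g) (hmM : m ≤ M) (a : ℝ) :
    GapBounded (a • S) (min (a * m) (a * M)) (max (a * m) (a * M)) (|a| * g) := by
  rcases le_total 0 a with ha | ha
  · rw [min_eq_left (mul_le_mul_of_nonneg_left hmM ha),
      max_eq_right (mul_le_mul_of_nonneg_left hmM ha), abs_of_nonneg ha]
    exact h.smul_of_nonneg ha
  · rw [min_eq_right (mul_le_mul_of_nonpos_left hmM ha),
      max_eq_left (mul_le_mul_of_nonpos_left hmM ha), abs_of_nonpos ha]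
    simpa [neg_smul_set] using (h.smul_of_nonneg (neg_nonneg.2 ha)).neg

theorem nonempty_inter_of_le_sub (h : GapBounded S m M g) {lo hi : ℝ} (hlo : lo ≤ M)
    (hhi : m ≤ hi) (hg : g ≤ hi - lo) : (S ∩ Icc lo hi).Nonempty := by
  by_cases h₁ : lo < m
  · exact ⟨m, h.left_mem, h₁.le, hhi⟩
  by_cases h₂ : M < hi
  · exact ⟨M, h.right_mem, hlo, h₂.le⟩
  obtain ⟨c, hcS, hc⟩ := h.nonempty_inter_Icc lo (not_lt.1 h₁) (by linarith)
  exact ⟨c, hcS, hc.1, by linarith [hc.2]⟩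

end GapBounded

-- The gap `q ^ n * (q - p) / q` is `q^(n-1)(q-p)`, written without truncated subtraction.
theorem gapBounded_pair_pow {p q : ℝ} (hp : 0 < p) (hpq : p ≤ q) (n : ℕ) :
    GapBounded ({p, q} ^ n) (p ^ n) (q ^ n) (q ^ n * (q - p) / q) := by
  have hq : 0 < q := hp.trans_le hpq
  induction n with
  | zero =>
    have hg : 0 ≤ (q - p) / q := div_nonneg (sub_nonneg.2 hpq) hq.le
    refine ⟨by simp, by simp, fun u hu hu' => ⟨1, by simp, ?_, ?_⟩⟩ <;>
      simp only [pow_zero, one_mul] at hu hu' ⊢ <;> linarith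
  | succ n ih =>
    have hsplit : ({p, q} : Set ℝ) ^ (n + 1) = p • {p, q} ^ n ∪ q • {p, q} ^ n := by
      rw [pow_succ', insert_eq, union_mul, singleton_mul, singleton_mul]; rfl
    have hg : 0 ≤ q ^ n * (q - p) / q := div_nonneg (mul_nonneg (pow_nonneg hq.le n) (sub_nonneg.2 hpq)) hq.le
    have hS := (ih.smul_of_nonneg hp.le).mono (mul_le_mul_of_nonneg_right hpq hg)
    have hT := ih.smul_of_nonneg hq.le
    have hqg : q * (q ^ n * (q - p) / q) = q ^ n * (q - p) := by field_simp
    rw [hsplit]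
    convert hS.union hT (by nlinarith [hqg, pow_le_pow_left₀ hp.le hpq n]) using 1 <;>
      field_simp <;> ring

theorem isBounded_pair_pow (p q : ℝ) (n : ℕ) : IsBounded (({p, q} : Set ℝ) ^ n) := by
  induction n with
  | zero => simpa using finite_one.isBounded
  | succ n ih => rw [pow_succ]; exact isBounded_mul ih (toFinite _).isBounded

theorem sub_le_tsum_nat_add_sub {m M : ℕ → ℝ} (hm : Summable m) (hM : Summable M)
    (hmM : ∀ n, m n ≤ M n) (n : ℕ) :
    M n - m n ≤ ∑' k, M (k + n) - ∑' k, m (k + n) := by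
  rw [← ((summable_nat_add_iff n).2 hM).tsum_sub ((summable_nat_add_iff n).2 hm)]
  simpa using ((summable_nat_add_iff n).2 (hM.sub hm)).le_tsum 0
    fun j _ => sub_nonneg.2 (hmM _)

theorem exists_seq_mem_sum_tendsto_of_gapBounded {C : ℕ → Set ℝ} {m M g : ℕ → ℝ}
    (hm : Summable m) (hM : Summable M) (hC : ∀ n, GapBounded (C n) (m n) (M n) (g n))
    (hg : ∀ n, g n ≤ ∑' k, M (k + (n + 1)) - ∑' k, m (k + (n + 1)))
    {t : ℝ} (ht : t ∈ Icc (∑' n, m n) (∑' n, M n)) :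
    ∃ y : ℕ → ℝ, (∀ n, y n ∈ ∑ i ∈ Finset.range n, C i) ∧ Tendsto y atTop (𝓝 t) := by
  have htail {f : ℕ → ℝ} (hf : Summable f) (n : ℕ) :
      ∑' k, f (k + n) = f n + ∑' k, f (k + (n + 1)) := by
    have h₀ := hf.sum_add_tsum_nat_add n
    have h₁ := hf.sum_add_tsum_nat_add (n + 1)
    rw [Finset.sum_range_succ] at h₁
    linarith
  have hstep : ∀ n, ∃ y ∈ ∑ i ∈ Finset.range n, C i,
      t - y ∈ Icc (∑' k, m (k + n)) (∑' k, M (k + n)) := by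
    intro n
    induction n with
    | zero => exact ⟨0, by simp, by simpa using ht⟩
    | succ n ih =>
      obtain ⟨y, hy, hlo, hhi⟩ := ih
      rw [htail hm] at hlo
      rw [htail hM] at hhi
      -- enter `C n` at a point leaving a remainder in the range of the tail sums
      obtain ⟨c, hc, hclo, hchi⟩ := (hC n).nonempty_inter_of_le_sub
        (lo := t - y - ∑' k, M (k + (n + 1))) (hi := t - y - ∑' k, m (k + (n + 1)))
        (by linarith) (by linarith) (by linarith [hg n])
      refine ⟨y + c, ?_, by linarith, by linarith⟩
      rw [Finset.sum_range_succ]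
      exact add_mem_add hy hc
  choose y hy hrem using hstep
  have hrem_tendsto : Tendsto (fun n => t - y n) atTop (𝓝 0) :=
    tendsto_of_tendsto_of_tendsto_of_le_of_le (tendsto_sum_nat_add m) (tendsto_sum_nat_add M)
      (fun n => (hrem n).1) (fun n => (hrem n).2)
  refine ⟨y, hy, ?_⟩
  simpa using (tendsto_const_nhds (x := t)).sub hrem_tendsto

theorem mem_of_tendsto_hausdorffDist {α : Type*} [MetricSpace α] {A : ℕ → Set α} {F : Set α}
    (hF : IsCompact F) (hFne : F.Nonempty) (hA : ∀ n, IsBounded (A n))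
    (hlim : Tendsto (fun n => hausdorffDist (A n) F) atTop (𝓝 0))
    {x : ℕ → α} {t : α} (hx : ∀ n, x n ∈ A n) (ht : Tendsto x atTop (𝓝 t)) : t ∈ F := by
  have hdist : Tendsto (fun n => infDist (x n) F) atTop (𝓝 0) :=
    squeeze_zero (fun n => infDist_nonneg) (fun n => infDist_le_hausdorffDist_of_mem (hx n)
      (hausdorffEDist_ne_top_of_nonempty_of_bounded ⟨x n, hx n⟩ hFne (hA n) hF.isBounded)) hlim
  have hzero : infDist t F = 0 :=
    tendsto_nhds_unique (((continuous_infDist_pt F).tendsto t).comp ht) hdist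
  exact (hF.isClosed.mem_iff_infDist_zero hFne).2 hzero

theorem isBounded_finsetSum {ι E : Type*} [SeminormedAddCommGroup E] (s : Finset ι)
    {C : ι → Set E} (hC : ∀ i, IsBounded (C i)) : IsBounded (∑ i ∈ s, C i) := by
  classical
  induction s using Finset.induction_on with
  | empty => simpa using finite_zero.isBounded
  | insert i s hi ih => rw [Finset.sum_insert hi]; exact (hC i).add ih

theorem exists_Icc_subset_of_tendsto_hausdorffDist {C : ℕ → Set ℝ} {m M g : ℕ → ℝ}
    (hm : Summable m) (hM : Summable M) (hmM : ∀ n, m n ≤ M n)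
    (hCb : ∀ n, IsBounded (C n)) (hC : ∀ n, GapBounded (C n) (m n) (M n) (g n))
    {N : ℕ} (hg : ∀ n, N ≤ n → g n ≤ M (n + 1) - m (n + 1))
    {F : Set ℝ} (hF : IsCompact F) (hFne : F.Nonempty)
    (hlim : Tendsto (fun n => hausdorffDist (∑ i ∈ Finset.range n, C i) F) atTop (𝓝 0)) :
    ∃ c, Icc (c + ∑' k, m (N + k)) (c + ∑' k, M (N + k)) ⊆ F := by
  have hmN : Summable fun k => m (N + k) := hm.comp_injective (add_right_injective N)
  have hMN : Summable fun k => M (N + k) := hM.comp_injective (add_right_injective N)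
  have hc : ∑ i ∈ Finset.range N, m i ∈ ∑ i ∈ Finset.range N, C i :=
    finsetSum_mem_finsetSum _ _ _ fun i _ => (hC i).left_mem
  refine ⟨∑ i ∈ Finset.range N, m i, ?_⟩
  rw [← image_const_add_Icc]
  rintro _ ⟨t, ht, rfl⟩
  obtain ⟨y, hy, hyt⟩ := exists_seq_mem_sum_tendsto_of_gapBounded hmN hMN (fun k => hC (N + k))
    (fun k => (hg (N + k) (Nat.le_add_right N k)).trans
      (sub_le_tsum_nat_add_sub hmN hMN (fun k => hmM (N + k)) (k + 1))) ht
  refine mem_of_tendsto_hausdorffDist hF hFne (fun n => isBounded_finsetSum _ hCb)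
    ((tendsto_add_atTop_iff_nat N).2 hlim) (fun n => ?_) (hyt.const_add _)
  rw [add_comm, Finset.sum_range_add]
  exact add_mem_add hc (hy n)

theorem abs_mul_pow_le_abs (c : ℝ) {x : ℝ} (hx₀ : 0 ≤ x) (hx₁ : x ≤ 1) (n : ℕ) :
    |c * x ^ n| ≤ |c| := by
  rw [abs_mul, abs_pow, abs_of_nonneg hx₀]
  exact mul_le_of_le_one_right (abs_nonneg c) (pow_le_one₀ hx₀ hx₁)

theorem summable_min_max_mul_pow {a : ℕ → ℝ} (ha : Summable fun i => |a i|) {p q : ℝ}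
    (hp : 0 ≤ p) (hpq : p ≤ q) (hq : q ≤ 1) :
    (Summable fun i => min (a i * p ^ i) (a i * q ^ i)) ∧
      Summable fun i => max (a i * p ^ i) (a i * q ^ i) := by
  have hbound (i : ℕ) : max |a i * p ^ i| |a i * q ^ i| ≤ |a i| :=
    max_le (abs_mul_pow_le_abs _ hp (hpq.trans hq) i) (abs_mul_pow_le_abs _ (hp.trans hpq) hq i)
  exact ⟨ha.of_norm_bounded fun i => abs_min_le_max_abs_abs.trans (hbound i),
    ha.of_norm_bounded fun i => abs_max_le_max_abs_abs.trans (hbound i)⟩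

theorem gap_le_of_ratio {ε p q x y : ℝ} {n : ℕ} (hp : 0 ≤ p) (hq : 0 < q) (hpq : p ≤ q)
    (hx : 0 ≤ x) (hxy : ε * x ≤ y) (hε : (q - p) / q ^ 2 ≤ ε * (1 - (p / q) ^ (n + 1))) :
    x * (q ^ n * (q - p) / q) ≤ y * (q ^ (n + 1) - p ^ (n + 1)) := by
  have hdiff : 0 ≤ q ^ (n + 1) - p ^ (n + 1) := sub_nonneg.2 (pow_le_pow_left₀ hp hpq _)
  calc x * (q ^ n * (q - p) / q) = x * q ^ (n + 1) * ((q - p) / q ^ 2) := by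
        field_simp; ring
    _ ≤ x * q ^ (n + 1) * (ε * (1 - (p / q) ^ (n + 1))) := by gcongr
    _ = ε * x * (q ^ (n + 1) - p ^ (n + 1)) := by rw [div_pow]; field_simp
    _ ≤ y * (q ^ (n + 1) - p ^ (n + 1)) := by gcongr

theorem eventually_gap_le_of_ratio {a : ℕ → ℝ} {ε p q : ℝ}
    (hratio : ∀ᶠ i in atTop, ε < |a (i + 1)| / |a i|) (hp : 0 < p) (hpq : p < q)
    (hpqε : (q - p) / q ^ 2 < ε) :
    ∀ᶠ n in atTop, a n ≠ 0 ∧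
      |a n| * (q ^ n * (q - p) / q) ≤ |a (n + 1)| * (q ^ (n + 1) - p ^ (n + 1)) := by
  have hq : 0 < q := hp.trans hpq
  have hε : 0 < ε := (div_nonneg (sub_nonneg.2 hpq.le) (sq_nonneg q)).trans_lt hpqε
  have hpow : ∀ᶠ n : ℕ in atTop, (q - p) / q ^ 2 < ε * (1 - (p / q) ^ (n + 1)) := by
    have h : Tendsto (fun n : ℕ => ε * (1 - (p / q) ^ (n + 1))) atTop (𝓝 (ε * (1 - 0))) :=
      (((tendsto_pow_atTop_nhds_zero_of_lt_one (by positivity) ((div_lt_one hq).2 hpq)).comp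
        (tendsto_add_atTop_nat 1)).const_sub 1).const_mul ε
    exact h.eventually_const_lt (by simpa using hpqε)
  filter_upwards [hratio, hpow] with n hn hpow_n
  have ha : a n ≠ 0 := fun h => by simp [h] at hn; linarith
  refine ⟨ha, gap_le_of_ratio hp.le hq hpq.le (abs_nonneg _) ?_ hpow_n.le⟩
  exact ((lt_div_iff₀ (abs_pos.2 ha)).1 hn).le

theorem interior_nonempty_fpq_general (a : ℕ → ℝ) (hsum : Summable (fun i => |a i|))
    (ε : ℝ) (hratio : ∀ᶠ i in Filter.atTop, ε < |a (i + 1)| / |a i|)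
    (p q : ℝ) (hp : 0 < p) (hpq : p < q) (hq : q ≤ 1) (hpqε : (q - p) / q ^ 2 < ε)
    (F : Set ℝ) (hF : IsCompact F) (hFne : F.Nonempty)
    (hlim : Filter.Tendsto
      (fun n => Metric.hausdorffDist
        (∑ i ∈ Finset.range n, a i • (({p, q} : Set ℝ) ^ i)) F)
      Filter.atTop (nhds 0)) :
    (interior F).Nonempty := by
  set m : ℕ → ℝ := fun i => min (a i * p ^ i) (a i * q ^ i)
  set M : ℕ → ℝ := fun i => max (a i * p ^ i) (a i * q ^ i)
  have hpow_le (i : ℕ) : p ^ i ≤ q ^ i := pow_le_pow_left₀ hp.le hpq.le i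
  have hM_sub_m (i : ℕ) : M i - m i = |a i| * (q ^ i - p ^ i) := by
    rw [max_sub_min_eq_abs, ← mul_sub, abs_mul, abs_of_nonneg (sub_nonneg.2 (hpow_le i))]
  obtain ⟨hm, hM⟩ := summable_min_max_mul_pow hsum hp.le hpq.le hq
  obtain ⟨N, hN⟩ := eventually_atTop.1 (eventually_gap_le_of_ratio hratio hp hpq hpqε)
  obtain ⟨c, hsub⟩ := exists_Icc_subset_of_tendsto_hausdorffDist hm hM (fun _ => min_le_max)
    (fun i => (isBounded_pair_pow p q i).smul₀ (a i))
    (fun i => (gapBounded_pair_pow hp hpq.le i).smul (hpow_le i) (a i))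
    (fun n hn => (hN n hn).2.trans_eq (hM_sub_m (n + 1)).symm) hF hFne hlim
  have hlt_succ : m (N + 1) < M (N + 1) := by
    have := mul_pos (abs_pos.2 (hN (N + 1) N.le_succ).1)
      (sub_pos.2 (pow_lt_pow_left₀ hpq hp.le (Nat.add_one_ne_zero N)))
    linarith [hM_sub_m (N + 1)]
  have hlt : ∑' k, m (N + k) < ∑' k, M (N + k) :=
    Summable.tsum_lt_tsum (i := 1) (fun _ => min_le_max) hlt_succ
      (hm.comp_injective (add_right_injective N)) (hM.comp_injective (add_right_injective N))
  have hinterior := interior_mono hsub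
  rw [interior_Icc] at hinterior
  exact (nonempty_Ioo.2 (by linarith)).mono hinterior

theorem interior_nonempty_fpq (a : ℕ → ℝ) (hsum : Summable (fun i => |a i|))
    (ε : ℝ) (hε : 0 < ε) (hratio : ∀ᶠ i in Filter.atTop, ε < |a (i + 1)| / |a i|)
    (p q : ℝ) (hp : 0 < p) (hpq : p < q) (hq : q ≤ 1) (hpqε : (q - p) / q ^ 2 < ε)
    (F : Set ℝ) (hF : IsCompact F) (hFne : F.Nonempty)
    (hlim : Filter.Tendsto
      (fun n => Metric.hausdorffDist
        (∑ i ∈ Finset.range n, a i • (({p, q} : Set ℝ) ^ i)) F)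
      Filter.atTop (nhds 0)) :
    (interior F).Nonempty :=
  interior_nonempty_fpq_general a hsum ε hratio p q hp hpq hq hpqε F hF hFne hlim
end

section
/- Let f(x) = Σ_{i≥0} aᵢxⁱ be a power series with Σᵢ|aᵢ| < ∞ and such that (log|aᵢ|)/(i·log i) → −∞ as i → ∞. Then the set of nonempty compact K ⊆ [0,1] for which the Hausdorff dimension of f(K) = Σᵢ aᵢ·K^{⊙i} is positive is meager in 𝒦([0,1]). -/
open Pointwise

/-- The space of nonempty compact subsets of `[0,1]`, with the Hausdorff metric topology. -/
def KIcc : Type := {K : TopologicalSpace.NonemptyCompacts ℝ // (K : Set ℝ) ⊆ Set.Icc 0 1}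

instance : TopologicalSpace KIcc := instTopologicalSpaceSubtype

/-!
If `K ⊆ [0,1]` lies within `δ` of a set `P ⊆ [0,1]` of `n` points, then `K ^ i` lies within
`i δ` of `P ^ i`, and `#(P ^ i) ≤ (i + 1) ^ n` since a product of points of `P` only depends on
their multiplicities. The growth condition gives a cutoff `m > n` with `|aᵢ| ≤ i ^ (-n²i)` for
`i ≥ m`, so the tail of the series beyond `m` has size at most `2 m ^ (-n²m)`. For `δ` small
enough, `f(K)` is therefore covered by at most `m ^ (nm)` balls of radius `4 m ^ (-n²m)`
centred at the points of `∑_{i<m} aᵢ P ^ i`, and once `n d ≥ 2` this cover has `d`-dimensional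
content at most `4 / m`. Being `δₙ`-close to an `n`-point set for infinitely many `n` is a
dense `G_δ` condition on `K`, so for generic `K` every `d`-dimensional Hausdorff measure of
`f(K)` vanishes.
-/

open Set Metric Filter Topology MeasureTheory
open scoped NNReal ENNReal Finset

namespace Finset

variable {α : Type*} [CommMonoid α] [DecidableEq α]

theorem exists_exponents_of_mem_pow {s : Finset α} {i : ℕ} {x : α} (hx : x ∈ s ^ i) :
    ∃ e : s → ℕ, (∀ p, e p ≤ i) ∧ ∏ p : s, (p : α) ^ e p = x := by
  induction i generalizing x with
  | zero => exact ⟨0, fun _ => le_rfl, by simpa using (mem_one.1 hx).symm⟩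
  | succ i ih =>
    rw [pow_succ] at hx
    obtain ⟨y, hy, z, hz, rfl⟩ := mem_mul.1 hx
    obtain ⟨e, he, rfl⟩ := ih hy
    refine ⟨e + Pi.single ⟨z, hz⟩ 1, fun p => ?_, ?_⟩
    · have := he p
      rw [Pi.add_apply, Pi.single_apply]
      split_ifs <;> omega
    · simp only [Pi.add_apply, pow_add, prod_mul_distrib]
      congr 1
      rw [Fintype.prod_eq_single ⟨z, hz⟩ fun p hp => by simp [hp]]
      simp

theorem card_pow_le_succ_pow_card (s : Finset α) (i : ℕ) : #(s ^ i) ≤ (i + 1) ^ #s := by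
  calc #(s ^ i)
      ≤ #(univ.image fun e : s → Fin (i + 1) => ∏ p : s, (p : α) ^ (e p : ℕ)) := by
        refine card_le_card fun x hx => ?_
        obtain ⟨e, he, rfl⟩ := exists_exponents_of_mem_pow hx
        exact mem_image.2 ⟨fun p => ⟨e p, Nat.lt_succ_of_le (he p)⟩, mem_univ _, rfl⟩
    _ ≤ (i + 1) ^ #s := card_image_le.trans (by simp)

theorem card_sum_le_prod_card {ι β : Type*} [AddCommMonoid β] [DecidableEq β] (t : Finset ι)
    (A : ι → Finset β) : #(∑ i ∈ t, A i) ≤ ∏ i ∈ t, #(A i) := by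
  classical
  induction t using Finset.induction_on with
  | empty => simp
  | insert j t hj ih =>
    rw [sum_insert hj, prod_insert hj]
    exact card_add_le.trans (Nat.mul_le_mul_left _ ih)

end Finset

theorem Metric.hausdorffDist_add_le_of_subset_closedBall {E : Type*} [SeminormedAddCommGroup E]
    {A T : Set E} {r : ℝ} (hT : T.Nonempty) (hTr : T ⊆ closedBall 0 r) :
    hausdorffDist (A + T) A ≤ r := by
  obtain ⟨t₀, ht₀⟩ := hT
  refine hausdorffDist_le_of_mem_dist (nonempty_closedBall.1 ⟨t₀, hTr ht₀⟩) ?_ ?_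
  · rintro _ ⟨x, hx, t, ht, rfl⟩
    exact ⟨x, hx, by simpa using hTr ht⟩
  · intro x hx
    exact ⟨x + t₀, add_mem_add hx ht₀, by simpa using hTr ht₀⟩

theorem Metric.hausdorffDist_le_of_tendsto {α ι : Type*} [PseudoMetricSpace α] {l : Filter ι}
    [l.NeBot] {S : ι → Set α} {F T : Set α} {τ : ℝ}
    (hlim : Tendsto (fun N => hausdorffDist (S N) F) l (𝓝 0))
    (hfin : ∀ᶠ N in l, hausdorffEDist F (S N) ≠ ⊤)
    (hτ : ∀ᶠ N in l, hausdorffDist (S N) T ≤ τ) : hausdorffDist F T ≤ τ := by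
  refine ge_of_tendsto (by simpa using hlim.add_const τ) ?_
  filter_upwards [hfin, hτ] with N hN hNτ
  calc hausdorffDist F T ≤ hausdorffDist F (S N) + hausdorffDist (S N) T :=
        hausdorffDist_triangle hN
    _ ≤ hausdorffDist (S N) F + τ := by rw [hausdorffDist_comm]; gcongr

theorem Metric.exists_finset_subset_hausdorffDist_lt {α : Type*} [PseudoMetricSpace α]
    {K : Set α} (hK : IsCompact K) (hne : K.Nonempty) {ε : ℝ} (hε : 0 < ε) :
    ∃ P : Finset α, P.Nonempty ∧ ↑P ⊆ K ∧ hausdorffDist K P < ε := by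
  obtain ⟨t, htK, htf, hcover⟩ := hK.finite_cover_balls (half_pos hε)
  obtain ⟨x₀, hx₀⟩ := hne
  obtain ⟨y₀, hy₀, -⟩ := mem_iUnion₂.1 (hcover hx₀)
  refine ⟨htf.toFinset, ⟨y₀, htf.mem_toFinset.2 hy₀⟩, by simpa using htK, ?_⟩
  refine lt_of_le_of_lt (hausdorffDist_le_of_mem_dist (half_pos hε).le ?_ ?_) (half_lt_self hε)
  · intro x hx
    obtain ⟨y, hy, hxy⟩ := mem_iUnion₂.1 (hcover hx)
    exact ⟨y, by simpa using hy, (mem_ball.1 hxy).le⟩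
  · intro y hy
    exact ⟨y, htK (by simpa using hy), by simp [(half_pos hε).le]⟩

theorem Set.norm_le_sum_of_mem_finsetSum {ι E : Type*} [SeminormedAddCommGroup E]
    {s : Finset ι} {A : ι → Set E} {r : ι → ℝ} (hA : ∀ i ∈ s, ∀ y ∈ A i, ‖y‖ ≤ r i)
    {x : E} (hx : x ∈ ∑ i ∈ s, A i) : ‖x‖ ≤ ∑ i ∈ s, r i := by
  obtain ⟨g, hg, rfl⟩ := (mem_finsetSum _ _ _).1 hx
  exact (norm_sum_le _ _).trans (Finset.sum_le_sum fun i hi => hA i hi _ (hg hi))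

theorem Set.exists_mem_finsetSum_dist_le {ι E : Type*} [SeminormedAddCommGroup E]
    {s : Finset ι} {A B : ι → Set E} {δ : ι → ℝ}
    (h : ∀ i ∈ s, ∀ x ∈ A i, ∃ y ∈ B i, dist x y ≤ δ i) {x : E}
    (hx : x ∈ ∑ i ∈ s, A i) :
    ∃ y ∈ ∑ i ∈ s, B i, dist x y ≤ ∑ i ∈ s, δ i := by
  classical
  obtain ⟨g, hg, rfl⟩ := (mem_finsetSum _ _ _).1 hx
  have hnear : ∀ i, ∃ y, i ∈ s → y ∈ B i ∧ dist (g i) y ≤ δ i := fun i => by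
    by_cases hi : i ∈ s
    · obtain ⟨y, hy, hd⟩ := h i hi _ (hg hi)
      exact ⟨y, fun _ => ⟨hy, hd⟩⟩
    · exact ⟨0, fun h => absurd h hi⟩
  choose y hy using hnear
  exact ⟨∑ i ∈ s, y i, finsetSum_mem_finsetSum _ _ _ fun i hi => (hy i hi).1,
    (dist_sum_sum_le s _ _).trans (Finset.sum_le_sum fun i hi => (hy i hi).2)⟩

theorem hausdorffMeasure_eq_zero_of_forall_finset_cover {X : Type*} [MetricSpace X]
    [MeasurableSpace X] [BorelSpace X] {F : Set X} {d : ℝ} (hd : 0 < d)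
    (h : ∀ ε > 0, ∃ (D : Finset X) (r : ℝ),
      0 ≤ r ∧ r ≤ ε ∧ #D * r ^ d ≤ ε ∧ F ⊆ ⋃ c ∈ D, closedBall c r) :
    μH[d] F = 0 := by
  choose D r hr0 hrε hcard hcover using fun j : ℕ => h (1 / (j + 1)) Nat.one_div_pos_of_nat
  have hr : Tendsto r atTop (𝓝 0) :=
    squeeze_zero hr0 hrε tendsto_one_div_add_atTop_nhds_zero_nat
  have h2r : Tendsto (fun j => ENNReal.ofReal (2 * r j)) atTop (𝓝 0) := by
    simpa using ENNReal.tendsto_ofReal (hr.const_mul 2)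
  have hdiam : ∀ j (c : D j), ediam (closedBall (c : X) (r j)) ≤ ENNReal.ofReal (2 * r j) :=
    fun j c => ediam_le_of_forall_dist_le fun x hx y hy => by
      linarith [dist_triangle_right x y c, mem_closedBall.1 hx, mem_closedBall.1 hy]
  have hcover' : ∀ j, F ⊆ ⋃ c : D j, closedBall (c : X) (r j) := fun j => by
    simpa only [iUnion_subtype] using hcover j
  have hsum : ∀ j, ∑ c : D j, ediam (closedBall (c : X) (r j)) ^ d
      ≤ ENNReal.ofReal (2 ^ d * (1 / (j + 1))) := fun j =>
    calc ∑ c : D j, ediam (closedBall (c : X) (r j)) ^ d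
        ≤ ∑ _c : D j, ENNReal.ofReal (2 * r j) ^ d :=
          Finset.sum_le_sum fun c _ => ENNReal.rpow_le_rpow (hdiam j c) hd.le
      _ = ENNReal.ofReal (2 ^ d * (#(D j) * r j ^ d)) := by
          rw [Finset.sum_const, Finset.card_univ, Fintype.card_coe, nsmul_eq_mul,
            ENNReal.ofReal_rpow_of_nonneg (by linarith [hr0 j]) hd.le,
            Real.mul_rpow zero_le_two (hr0 j), ← ENNReal.ofReal_natCast,
            ← ENNReal.ofReal_mul (by positivity)]
          ring_nf
      _ ≤ ENNReal.ofReal (2 ^ d * (1 / (j + 1))) := by gcongr; exact hcard j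
  have hlim : Tendsto (fun j : ℕ => ENNReal.ofReal (2 ^ d * (1 / (j + 1)))) atTop (𝓝 0) := by
    simpa using ENNReal.tendsto_ofReal
      (tendsto_one_div_add_atTop_nhds_zero_nat.const_mul (2 ^ d))
  refine le_antisymm ?_ bot_le
  calc μH[d] F ≤ liminf (fun j => ∑ c : D j, ediam (closedBall (c : X) (r j)) ^ d) atTop :=
        Measure.hausdorffMeasure_le_liminf_sum d F _ h2r _ (Eventually.of_forall hdiam)
          (Eventually.of_forall hcover')
    _ ≤ liminf (fun j : ℕ => ENNReal.ofReal (2 ^ d * (1 / (j + 1)))) atTop :=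
        liminf_le_liminf (Eventually.of_forall hsum)
    _ = 0 := hlim.liminf_eq

theorem dimH_eq_zero_of_forall_finset_cover {X : Type*} [MetricSpace X] [MeasurableSpace X]
    [BorelSpace X] {F : Set X}
    (h : ∀ d : ℝ, 0 < d → d ≤ 1 → ∀ ε > 0, ∃ (D : Finset X) (r : ℝ),
      0 ≤ r ∧ r ≤ ε ∧ #D * r ^ d ≤ ε ∧ F ⊆ ⋃ c ∈ D, closedBall c r) :
    dimH F = 0 := by
  refine nonpos_iff_eq_zero.1 (ENNReal.le_of_forall_pos_le_add fun ε hε _ => ?_)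
  have hε1 : (0 : ℝ) < (min ε 1 : ℝ≥0) := NNReal.coe_pos.2 (lt_min hε one_pos)
  have hε1' : ((min ε 1 : ℝ≥0) : ℝ) ≤ 1 := by exact_mod_cast min_le_right ε 1
  calc dimH F ≤ ((min ε 1 : ℝ≥0) : ℝ≥0∞) := dimH_le_of_hausdorffMeasure_ne_top <| by
        rw [hausdorffMeasure_eq_zero_of_forall_finset_cover hε1 (h _ hε1 hε1')]
        exact ENNReal.zero_ne_top
    _ ≤ 0 + ε := by rw [zero_add]; exact_mod_cast min_le_left ε 1

namespace MinkowskiPowerSeries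

def partialSum (a : ℕ → ℝ) (K : Set ℝ) (N : ℕ) : Set ℝ :=
  ∑ i ∈ Finset.range N, a i • K ^ i

variable {a : ℕ → ℝ} {K : Set ℝ}

/-- `P` has to be nonempty: `hausdorffDist K ∅ = 0` is a junk value. -/
def NearFinset (n : ℕ) (ε : ℝ) (K : Set ℝ) : Prop :=
  ∃ P : Finset ℝ, P.Nonempty ∧ (P : Set ℝ) ⊆ Icc 0 1 ∧ #P ≤ n ∧
    hausdorffDist K P < ε

theorem isOpen_setOf_nearFinset (n : ℕ) (ε : ℝ) : IsOpen {K : KIcc | NearFinset n ε K.1} := by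
  refine isOpen_iff_forall_mem_open.2 fun K ⟨P, hPne, hP01, hPn, hKP⟩ =>
    ⟨{L | hausdorffDist (L.1 : Set ℝ) P < ε}, fun L hL => ⟨P, hPne, hP01, hPn, hL⟩, ?_,
      hKP⟩
  let P' : TopologicalSpace.NonemptyCompacts ℝ :=
    ⟨⟨P, P.finite_toSet.isCompact⟩, by simpa using hPne⟩
  have hball := isOpen_ball (x := P') (ε := ε)
  simp only [ball, NonemptyCompacts.dist_eq] at hball
  exact hball.preimage continuous_subtype_val

theorem dense_setOf_exists_ge_nearFinset {δ : ℕ → ℝ} (hδ : ∀ n, 0 < δ n) (m : ℕ) :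
    Dense {K : KIcc | ∃ n ≥ m, NearFinset n (δ n) K.1} := by
  refine IsInducing.subtypeVal.dense_iff.2 fun K => Metric.mem_closure_iff.2 fun ε hε => ?_
  obtain ⟨P, hPne, hPK, hKP⟩ :=
    exists_finset_subset_hausdorffDist_lt K.1.isCompact K.1.nonempty hε
  let K' : KIcc := ⟨⟨⟨P, P.finite_toSet.isCompact⟩, by simpa using hPne⟩, hPK.trans K.2⟩
  refine ⟨K'.1, mem_image_of_mem _ ⟨max m #P, le_max_left _ _, P, hPne, hPK.trans K.2,
    le_max_right _ _, ?_⟩, by rwa [NonemptyCompacts.dist_eq]⟩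
  show hausdorffDist (P : Set ℝ) P < δ _
  rw [hausdorffDist_self_zero]
  exact hδ _

theorem residual_frequently_nearFinset {δ : ℕ → ℝ} (hδ : ∀ n, 0 < δ n) :
    {K : KIcc | ∃ᶠ n in atTop, NearFinset n (δ n) K.1} ∈ residual KIcc := by
  have hiInter : {K : KIcc | ∃ᶠ n in atTop, NearFinset n (δ n) K.1} =
      ⋂ m, {K : KIcc | ∃ n ≥ m, NearFinset n (δ n) K.1} := by
    ext K
    simp [frequently_atTop]
  have hiUnion : ∀ m, {K : KIcc | ∃ n ≥ m, NearFinset n (δ n) K.1} =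
      ⋃ n ≥ m, {K : KIcc | NearFinset n (δ n) K.1} := fun m => by
    ext K
    simp
  rw [hiInter]
  refine countable_iInter_mem.2 fun m =>
    residual_of_dense_open ?_ (dense_setOf_exists_ge_nearFinset hδ m)
  rw [hiUnion]
  exact isOpen_biUnion fun n _ => isOpen_setOf_nearFinset n (δ n)

theorem pow_subset_Icc (hK01 : K ⊆ Icc 0 1) (i : ℕ) : K ^ i ⊆ Icc 0 1 := by
  induction i with
  | zero => simp
  | succ i ih =>
    rw [pow_succ]
    rintro _ ⟨y, hy, z, hz, rfl⟩
    obtain ⟨hy0, hy1⟩ := ih hy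
    obtain ⟨hz0, hz1⟩ := hK01 hz
    exact ⟨mul_nonneg hy0 hz0, mul_le_one₀ hy1 hz0 hz1⟩

theorem norm_le_of_mem_smul_pow (hK01 : K ⊆ Icc 0 1) {c x : ℝ} {i : ℕ}
    (hx : x ∈ c • K ^ i) : ‖x‖ ≤ |c| := by
  obtain ⟨y, hy, rfl⟩ := hx
  obtain ⟨hy0, hy1⟩ := pow_subset_Icc hK01 i hy
  show ‖c * y‖ ≤ |c|
  rw [Real.norm_eq_abs, abs_mul, abs_of_nonneg hy0]
  exact mul_le_of_le_one_right (abs_nonneg c) hy1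

theorem exists_mem_pow_dist_le {P : Set ℝ} (hK01 : K ⊆ Icc 0 1) (hP01 : P ⊆ Icc 0 1) {ε : ℝ}
    (hKP : ∀ z ∈ K, ∃ p ∈ P, dist z p ≤ ε) (i : ℕ) :
    ∀ x ∈ K ^ i, ∃ q ∈ P ^ i, dist x q ≤ i * ε := by
  induction i with
  | zero => intro x hx; exact ⟨1, by simp, by simp_all⟩
  | succ i ih =>
    rw [pow_succ]
    rintro _ ⟨y, hy, z, hz, rfl⟩
    obtain ⟨q, hq, hyq⟩ := ih y hy
    obtain ⟨p, hp, hzp⟩ := hKP z hz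
    refine ⟨q * p, mul_mem_mul hq hp, ?_⟩
    have hz1 : |z| ≤ 1 := abs_le.2 ⟨by linarith [(hK01 hz).1], (hK01 hz).2⟩
    have hq1 : |q| ≤ 1 := by
      obtain ⟨hq0, hq1⟩ := pow_subset_Icc hP01 i hq
      exact abs_le.2 ⟨by linarith, hq1⟩
    calc dist (y * z) (q * p) = |z * (y - q) + q * (z - p)| := by
          rw [Real.dist_eq]; congr 1; ring
      _ ≤ |z| * dist y q + |q| * dist z p := by
          rw [Real.dist_eq, Real.dist_eq, ← abs_mul, ← abs_mul]; exact abs_add_le _ _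
      _ ≤ 1 * (i * ε) + 1 * ε := by gcongr
      _ = ↑(i + 1) * ε := by push_cast; ring

theorem sum_smul_pow_nonempty (hK : K.Nonempty) (s : Finset ℕ) :
    (∑ i ∈ s, a i • K ^ i).Nonempty := by
  choose y hy using fun i : ℕ => (hK.pow (n := i)).smul_set (a := a i)
  exact ⟨_, finsetSum_mem_finsetSum _ _ y fun i _ => hy i⟩

theorem partialSum_subset_closedBall (hK01 : K ⊆ Icc 0 1) (N : ℕ) :
    partialSum a K N ⊆ closedBall 0 (∑ i ∈ Finset.range N, |a i|) := fun _ hx =>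
  mem_closedBall_zero_iff.2 <|
    norm_le_sum_of_mem_finsetSum (fun _ _ _ hy => norm_le_of_mem_smul_pow hK01 hy) hx

theorem hausdorffDist_partialSum_le (hK : K.Nonempty) (hK01 : K ⊆ Icc 0 1) {M N : ℕ}
    (hMN : M ≤ N) :
    hausdorffDist (partialSum a K N) (partialSum a K M) ≤ ∑ i ∈ Finset.Ico M N, |a i| := by
  rw [partialSum, ← Finset.sum_range_add_sum_Ico _ hMN]
  refine hausdorffDist_add_le_of_subset_closedBall ?_ fun x hx => mem_closedBall_zero_iff.2 <|
    norm_le_sum_of_mem_finsetSum (fun _ _ _ hy => norm_le_of_mem_smul_pow hK01 hy) hx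
  exact sum_smul_pow_nonempty hK _

theorem hausdorffEDist_partialSum_ne_top {F : Set ℝ} (hFb : Bornology.IsBounded F)
    (hFne : F.Nonempty) (hK : K.Nonempty) (hK01 : K ⊆ Icc 0 1) (N : ℕ) :
    hausdorffEDist F (partialSum a K N) ≠ ⊤ :=
  hausdorffEDist_ne_top_of_nonempty_of_bounded hFne (sum_smul_pow_nonempty hK _) hFb
    (isBounded_closedBall.subset (partialSum_subset_closedBall hK01 N))

theorem exists_mem_finset_partialSum_dist_le {P : Finset ℝ} (hK01 : K ⊆ Icc 0 1)
    (hP01 : (P : Set ℝ) ⊆ Icc 0 1) {ε : ℝ} (hε : 0 ≤ ε)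
    (hKP : ∀ z ∈ K, ∃ p ∈ P, dist z p ≤ ε) (M : ℕ) {x : ℝ} (hx : x ∈ partialSum a K M) :
    ∃ y ∈ ∑ i ∈ Finset.range M, a i • P ^ i,
      dist x y ≤ M * ε * ∑ i ∈ Finset.range M, |a i| := by
  have hterm : ∀ i ∈ Finset.range M, ∀ x ∈ a i • K ^ i,
      ∃ y ∈ a i • (P : Set ℝ) ^ i, dist x y ≤ |a i| * (i * ε) := by
    rintro i - _ ⟨z, hz, rfl⟩
    obtain ⟨q, hq, hzq⟩ := exists_mem_pow_dist_le hK01 hP01 (by simpa using hKP) i z hz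
    refine ⟨a i • q, smul_mem_smul_set hq, ?_⟩
    rw [dist_smul₀, Real.norm_eq_abs]
    gcongr
  obtain ⟨y, hy, hxy⟩ := exists_mem_finsetSum_dist_le hterm hx
  refine ⟨y, by rw [← Finset.mem_coe]; push_cast; exact hy, hxy.trans ?_⟩
  rw [Finset.mul_sum]
  refine Finset.sum_le_sum fun i hi => ?_
  have hiM : (i : ℝ) ≤ M := by exact_mod_cast (Finset.mem_range.1 hi).le
  calc |a i| * (i * ε) ≤ |a i| * (M * ε) := by gcongr
    _ = M * ε * |a i| := by ring

theorem card_sum_smul_pow_le (P : Finset ℝ) (M : ℕ) :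
    #(∑ i ∈ Finset.range M, a i • P ^ i) ≤ M ^ (#P * M) := by
  calc #(∑ i ∈ Finset.range M, a i • P ^ i) ≤ ∏ i ∈ Finset.range M, #(a i • P ^ i) :=
        Finset.card_sum_le_prod_card _ _
    _ ≤ ∏ _i ∈ Finset.range M, M ^ #P := Finset.prod_le_prod' fun i hi =>
        Finset.card_smul_finset_le.trans <| (Finset.card_pow_le_succ_pow_card P i).trans <|
          Nat.pow_le_pow_left (Finset.mem_range.1 hi) _
    _ = M ^ (#P * M) := by rw [Finset.prod_const, Finset.card_range, ← pow_mul]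

theorem eventually_abs_le_inv_pow
    (hfast : Tendsto (fun i : ℕ => Real.log |a i| / (i * Real.log i)) atTop atBot) (c : ℕ) :
    ∀ᶠ i : ℕ in atTop, |a i| ≤ ((i : ℝ) ^ (c * i))⁻¹ := by
  filter_upwards [hfast.eventually_le_atBot (-(c : ℝ)), eventually_ge_atTop 2] with i hi hi2
  have hi1 : (1 : ℝ) < i := by exact_mod_cast hi2
  have hilog : 0 < (i : ℝ) * Real.log i := mul_pos (by linarith) (Real.log_pos hi1)
  rcases eq_or_ne (a i) 0 with h0 | h0
  · rw [h0, abs_zero]; positivity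
  rw [← Real.log_le_log_iff (abs_pos.2 h0) (by positivity), Real.log_inv, Real.log_pow]
  rw [div_le_iff₀ hilog] at hi
  push_cast
  linarith

theorem sum_Ico_abs_le_of_abs_le_inv_pow {c M : ℕ} (hc : 1 ≤ c) (hM : 2 ≤ M)
    (hdecay : ∀ i ≥ M, |a i| ≤ ((i : ℝ) ^ (c * i))⁻¹) (N : ℕ) :
    ∑ i ∈ Finset.Ico M N, |a i| ≤ 2 * ((M : ℝ) ^ (c * M))⁻¹ := by
  set κ := ((M : ℝ) ^ (c * M))⁻¹
  have hM2 : (2 : ℝ) ≤ M := by exact_mod_cast hM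
  have hterm : ∀ j : ℕ, |a (M + j)| ≤ κ * (1 / 2) ^ j := fun j => by
    refine (hdecay (M + j) (Nat.le_add_right M j)).trans ?_
    rw [one_div, inv_pow, ← mul_inv]
    refine inv_anti₀ (by positivity) ?_
    calc (M : ℝ) ^ (c * M) * 2 ^ j ≤ (M : ℝ) ^ (c * M) * (M : ℝ) ^ (c * j) := by
          gcongr
          calc (2 : ℝ) ^ j ≤ (M : ℝ) ^ j := by gcongr
            _ ≤ (M : ℝ) ^ (c * j) :=
                pow_le_pow_right₀ (by linarith) (Nat.le_mul_of_pos_left j hc)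
      _ = (M : ℝ) ^ (c * (M + j)) := by rw [← pow_add, mul_add]
      _ ≤ ((M + j : ℕ) : ℝ) ^ (c * (M + j)) := by gcongr; exact_mod_cast Nat.le_add_right M j
  calc ∑ i ∈ Finset.Ico M N, |a i| = ∑ j ∈ Finset.range (N - M), |a (M + j)| :=
        Finset.sum_Ico_eq_sum_range _ _ _
    _ ≤ ∑ j ∈ Finset.range (N - M), κ * (1 / 2) ^ j := Finset.sum_le_sum fun j _ => hterm j
    _ ≤ κ * 2 := by rw [← Finset.mul_sum]; gcongr; exact sum_geometric_two_le _
    _ = 2 * κ := mul_comm _ _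

theorem exists_cutoff
    (hfast : Tendsto (fun i : ℕ => Real.log |a i| / (i * Real.log i)) atTop atBot) :
    ∃ M : ℕ → ℕ, (∀ n, n < M n) ∧
      ∀ n, ∀ i ≥ M n, |a i| ≤ ((i : ℝ) ^ (n ^ 2 * i))⁻¹ := by
  choose M hM using fun n => eventually_atTop.1 (eventually_abs_le_inv_pow hfast (n ^ 2))
  exact ⟨fun n => max (M n) (n + 1), fun n => by simp,
    fun n i hi => hM n i (le_of_max_le_left hi)⟩

/-- Chosen so that `m * precision a n m * ∑ i < m, |a i| ≤ m ^ (-n²m)`, the size of the tail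
of the series beyond a cutoff `m` with `|aᵢ| ≤ i ^ (-n²i)` for `i ≥ m`. -/
noncomputable def precision (a : ℕ → ℝ) (n m : ℕ) : ℝ :=
  ((m : ℝ) ^ (n ^ 2 * m))⁻¹ / (m * (∑ i ∈ Finset.range m, |a i| + 1))

theorem precision_pos {m : ℕ} (hm : 0 < m) (n : ℕ) : 0 < precision a n m := by
  unfold precision
  positivity

theorem exists_finset_cover_of_nearFinset {n m : ℕ} (hn : 1 ≤ n) (hm : 2 ≤ m)
    (hdecay : ∀ i ≥ m, |a i| ≤ ((i : ℝ) ^ (n ^ 2 * i))⁻¹)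
    (hK : K.Nonempty) (hK01 : K ⊆ Icc 0 1) (hnear : NearFinset n (precision a n m) K)
    {F : Set ℝ} (hFb : Bornology.IsBounded F) (hFne : F.Nonempty)
    (hlim : Tendsto (fun N => hausdorffDist (partialSum a K N) F) atTop (𝓝 0)) :
    ∃ D : Finset ℝ, #D ≤ m ^ (n * m) ∧
      F ⊆ ⋃ c ∈ D, closedBall c (4 * ((m : ℝ) ^ (n ^ 2 * m))⁻¹) := by
  obtain ⟨P, hPne, hP01, hPn, hKP⟩ := hnear
  set κ := ((m : ℝ) ^ (n ^ 2 * m))⁻¹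
  set A := ∑ i ∈ Finset.range m, |a i|
  have hκ : 0 < κ := by positivity
  have hKP' : ∀ z ∈ K, ∃ p ∈ P, dist z p ≤ precision a n m := fun z hz => by
    obtain ⟨p, hp, hzp⟩ := exists_dist_lt_of_hausdorffDist_lt hz hKP <|
      hausdorffEDist_ne_top_of_nonempty_of_bounded hK (by simpa using hPne)
        ((isBounded_Icc 0 1).subset hK01) P.finite_toSet.isBounded
    exact ⟨p, hp, hzp.le⟩
  have hFS : hausdorffDist F (partialSum a K m) < 3 * κ := by
    refine lt_of_le_of_lt (hausdorffDist_le_of_tendsto (τ := 2 * κ) hlim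
      (Eventually.of_forall fun N => hausdorffEDist_partialSum_ne_top hFb hFne hK hK01 N) ?_)
      (by linarith)
    filter_upwards [eventually_ge_atTop m] with N hN
    exact (hausdorffDist_partialSum_le hK hK01 hN).trans
      (sum_Ico_abs_le_of_abs_le_inv_pow (Nat.one_le_pow _ _ hn) hm hdecay N)
  have hδ : m * precision a n m * A ≤ κ := by
    have hA : 0 ≤ A := Finset.sum_nonneg fun i _ => abs_nonneg _
    have : m * precision a n m * A = κ * (A / (A + 1)) := by
      simp only [precision, κ, A]; field_simp
    rw [this]
    exact mul_le_of_le_one_right hκ.le ((div_le_one (by linarith)).2 (by linarith))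
  refine ⟨∑ i ∈ Finset.range m, a i • P ^ i, (card_sum_smul_pow_le P m).trans
    (Nat.pow_le_pow_right (by omega) (Nat.mul_le_mul_right m hPn)), fun x hx => ?_⟩
  obtain ⟨s, hs, hxs⟩ := exists_dist_lt_of_hausdorffDist_lt hx hFS
    (hausdorffEDist_partialSum_ne_top hFb hFne hK hK01 m)
  obtain ⟨y, hy, hsy⟩ :=
    exists_mem_finset_partialSum_dist_le hK01 hP01 (precision_pos (by omega) n).le hKP' m hs
  exact mem_iUnion₂.2 ⟨y, hy, mem_closedBall.2 (by linarith [dist_triangle x s y])⟩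

theorem pow_mul_four_mul_inv_pow_rpow_le {n m : ℕ} (hm : 1 ≤ m) {d : ℝ} (hd1 : d ≤ 1)
    (hnd : 2 ≤ n * d) :
    ((m ^ (n * m) : ℕ) : ℝ) * (4 * ((m : ℝ) ^ (n ^ 2 * m))⁻¹) ^ d ≤ 4 / m := by
  have hm1 : (1 : ℝ) ≤ m := by exact_mod_cast hm
  have hn : (2 : ℝ) ≤ n := by nlinarith
  have hd0 : 0 < d := by nlinarith
  have hexp : ((n * m : ℕ) : ℝ) + 1 ≤ ((n ^ 2 * m : ℕ) : ℝ) * d := by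
    push_cast; nlinarith [mul_le_mul_of_nonneg_left hnd (by positivity : (0 : ℝ) ≤ n * m)]
  have h4 : (4 : ℝ) ^ d ≤ 4 := by
    simpa using Real.rpow_le_rpow_of_exponent_le (by norm_num : (1 : ℝ) ≤ 4) hd1
  calc ((m ^ (n * m) : ℕ) : ℝ) * (4 * ((m : ℝ) ^ (n ^ 2 * m))⁻¹) ^ d
      = 4 ^ d * ((m : ℝ) ^ ((n * m : ℕ) : ℝ) /
          (m : ℝ) ^ (((n ^ 2 * m : ℕ) : ℝ) * d)) := by
        rw [Real.mul_rpow (by norm_num) (by positivity), Real.inv_rpow (by positivity),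
          ← Real.rpow_natCast _ (n ^ 2 * m), ← Real.rpow_mul (by positivity), Real.rpow_natCast]
        push_cast; ring
    _ ≤ 4 * ((m : ℝ) ^ ((n * m : ℕ) : ℝ) / (m : ℝ) ^ (((n * m : ℕ) : ℝ) + 1)) := by
        gcongr
    _ = 4 / m := by
        rw [Real.rpow_add_one (by positivity)]
        field_simp

theorem dimH_eq_zero_of_frequently_nearFinset (M : ℕ → ℕ) (hM : ∀ n, n < M n)
    (hdecay : ∀ n, ∀ i ≥ M n, |a i| ≤ ((i : ℝ) ^ (n ^ 2 * i))⁻¹)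
    (hK : K.Nonempty) (hK01 : K ⊆ Icc 0 1)
    (hnear : ∃ᶠ n in atTop, NearFinset n (precision a n (M n)) K)
    {F : Set ℝ} (hFb : Bornology.IsBounded F) (hFne : F.Nonempty)
    (hlim : Tendsto (fun N => hausdorffDist (partialSum a K N) F) atTop (𝓝 0)) :
    dimH F = 0 := by
  refine dimH_eq_zero_of_forall_finset_cover fun d hd0 hd1 ε hε => ?_
  obtain ⟨n, hn, hnearn⟩ := frequently_atTop.1 hnear (max ⌈2 / d⌉₊ ⌈4 / ε⌉₊)
  have hnd : 2 ≤ n * d := by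
    have := (Nat.le_ceil (2 / d)).trans (Nat.cast_le.2 (le_of_max_le_left hn))
    rwa [div_le_iff₀ hd0] at this
  have hn2 : 2 ≤ n := by exact_mod_cast (show (2 : ℝ) ≤ n by nlinarith)
  have hm2 : 2 ≤ M n := by have := hM n; omega
  have hnε : 4 / ε ≤ n := (Nat.le_ceil _).trans (Nat.cast_le.2 (le_of_max_le_right hn))
  have hnm : (n : ℝ) < M n := by exact_mod_cast hM n
  have h4m : 4 / (M n : ℝ) ≤ ε := by
    rw [div_le_iff₀ hε] at hnε
    rw [div_le_iff₀ (by linarith)]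
    nlinarith [mul_lt_mul_of_pos_left hnm hε]
  obtain ⟨D, hD, hcover⟩ := exists_finset_cover_of_nearFinset (by omega) hm2 (hdecay n)
    hK hK01 hnearn hFb hFne hlim
  refine ⟨D, 4 * ((M n : ℝ) ^ (n ^ 2 * M n))⁻¹, by positivity, ?_, ?_, hcover⟩
  · refine le_trans ?_ h4m
    rw [div_eq_mul_inv]
    gcongr
    exact le_self_pow₀ (by exact_mod_cast hm2.trans' one_le_two)
      (Nat.mul_ne_zero (pow_ne_zero _ (by omega)) (by omega))
  · calc (#D : ℝ) * (4 * ((M n : ℝ) ^ (n ^ 2 * M n))⁻¹) ^ d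
        ≤ ((M n ^ (n * M n) : ℕ) : ℝ) * (4 * ((M n : ℝ) ^ (n ^ 2 * M n))⁻¹) ^ d := by
          gcongr
      _ ≤ 4 / M n := pow_mul_four_mul_inv_pow_rpow_le (by omega) hd1 hnd
      _ ≤ ε := h4m

end MinkowskiPowerSeries

theorem meager_positive_dimension_general (a : ℕ → ℝ)
    (hfast : Filter.Tendsto (fun i : ℕ => Real.log |a i| / (i * Real.log i))
      Filter.atTop Filter.atBot) :
    IsMeagre {K : KIcc |
      ∃ F : Set ℝ, IsCompact F ∧ F.Nonempty ∧
        Filter.Tendsto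
          (fun n => Metric.hausdorffDist
            (∑ i ∈ Finset.range n, a i • ((K.1 : Set ℝ) ^ i)) F)
          Filter.atTop (nhds 0) ∧
        0 < dimH F} := by
  obtain ⟨M, hM, hdecay⟩ := MinkowskiPowerSeries.exists_cutoff hfast
  refine mem_of_superset (MinkowskiPowerSeries.residual_frequently_nearFinset
    fun n => MinkowskiPowerSeries.precision_pos (a := a) (Nat.zero_lt_of_lt (hM n)) n) ?_
  rintro K hK ⟨F, hFc, hFne, hlim, hdim⟩
  exact hdim.ne' (MinkowskiPowerSeries.dimH_eq_zero_of_frequently_nearFinset M hM hdecay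
    K.1.nonempty K.2 hK hFc.isBounded hFne hlim)

theorem meager_positive_dimension (a : ℕ → ℝ) (hsum : Summable (fun i => |a i|))
    (hfast : Filter.Tendsto (fun i : ℕ => Real.log |a i| / (i * Real.log i))
      Filter.atTop Filter.atBot) :
    IsMeagre {K : KIcc |
      ∃ F : Set ℝ, IsCompact F ∧ F.Nonempty ∧
        Filter.Tendsto
          (fun n => Metric.hausdorffDist
            (∑ i ∈ Finset.range n, a i • ((K.1 : Set ℝ) ^ i)) F)
          Filter.atTop (nhds 0) ∧
        0 < dimH F} :=
  meager_positive_dimension_general a hfast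
end

section
/- Let (aᵢ) be a sequence of reals with Σᵢ|aᵢ| < ∞, |aᵢ| > 0 for all i, and (log|aᵢ|)/(i·log i) → −∞. Setting Rₙ = Σ_{i≥n}|aᵢ|, one has (log Rₙ)/(n·log n) → −∞ as n → ∞. -/
/-!
Since `m log m ≥ n log n + (m - n)` for `m ≥ n ≥ 3`, the hypothesis `log |aₘ| ≤ -L m log m`
(eventually, for any `L ≥ max K 1`) makes `|a_{n+i}| ≤ e^{-K n log n} 2^{-i}`. Summing the
geometric series gives `log Rₙ ≤ log 2 - K n log n` for all large `n`, and `K` is arbitrary.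
-/

open Filter Real

lemma one_le_log_of_three_le {x : ℝ} (hx : 3 ≤ x) : 1 ≤ log x :=
  (le_log_iff_exp_le (by linarith)).2 (exp_one_lt_three.le.trans hx)

lemma one_le_nat_mul_log {n : ℕ} (hn : 3 ≤ n) : 1 ≤ (n : ℝ) * log n := by
  have hn' : (3 : ℝ) ≤ n := by exact_mod_cast hn
  nlinarith [one_le_log_of_three_le hn']

lemma nat_mul_log_add_le {n : ℕ} (hn : 3 ≤ n) (i : ℕ) :
    (n : ℝ) * log n + i ≤ ((n + i : ℕ) : ℝ) * log (n + i : ℕ) := by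
  have hn' : (3 : ℝ) ≤ n := by exact_mod_cast hn
  have hle : (n : ℝ) ≤ (n + i : ℕ) := by exact_mod_cast Nat.le_add_right n i
  have hlog_n := one_le_log_of_three_le hn'
  have hlog_le : log n ≤ log (n + i : ℕ) := log_le_log (by linarith) hle
  push_cast at hle hlog_le ⊢
  nlinarith [Nat.cast_nonneg (α := ℝ) i]

lemma tsum_le_two_mul_of_le_geometric {f : ℕ → ℝ} {c : ℝ} (hf : Summable f)
    (h : ∀ i, f i ≤ c * (1 / 2) ^ i) : ∑' i, f i ≤ 2 * c := by
  calc ∑' i, f i ≤ ∑' i, c * (1 / 2 : ℝ) ^ i :=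
        hf.tsum_le_tsum h (summable_geometric_two.mul_left c)
    _ = 2 * c := by rw [tsum_mul_left, tsum_geometric_two, mul_comm]

lemma eventually_abs_tail_le_geometric (a : ℕ → ℝ) (hpos : ∀ i, 0 < |a i|)
    (hfast : Tendsto (fun i : ℕ => log |a i| / (i * log i)) atTop atBot) (K : ℝ) :
    ∀ᶠ n : ℕ in atTop, ∀ i, |a (n + i)| ≤ exp (-K * (n * log n)) * (1 / 2) ^ i := by
  set L := max K 1
  obtain ⟨N, hN⟩ := eventually_atTop.1 (hfast.eventually (eventually_le_atBot (-L)))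
  filter_upwards [eventually_ge_atTop (max N 3)] with n hn i
  have hn3 : 3 ≤ n := le_of_max_le_right hn
  have hmono := nat_mul_log_add_le hn3 i
  have hs := one_le_nat_mul_log hn3
  have hlog : log |a (n + i)| ≤ -L * (((n + i : ℕ) : ℝ) * log (n + i : ℕ)) :=
    (div_le_iff₀ (by linarith [Nat.cast_nonneg (α := ℝ) i])).1 (hN (n + i) (by omega))
  have hKL : K ≤ L := le_max_left K 1
  have h1L : 1 ≤ L := le_max_right K 1
  have hlog2 : log 2 < 1 := by linarith [log_two_lt_d9]
  calc |a (n + i)| = exp (log |a (n + i)|) := (exp_log (hpos _)).symm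
    _ ≤ exp (-K * (n * log n) + i * log (1 / 2)) := by
        rw [exp_le_exp, one_div, log_inv]
        nlinarith [Nat.cast_nonneg (α := ℝ) i]
    _ = exp (-K * (n * log n)) * (1 / 2) ^ i := by
        rw [exp_add, exp_nat_mul, exp_log (by norm_num)]

theorem tail_log_tendsto_atBot (a : ℕ → ℝ) (hsum : Summable (fun i => |a i|))
    (hpos : ∀ i, 0 < |a i|)
    (hfast : Filter.Tendsto (fun i : ℕ => Real.log |a i| / (i * Real.log i))
      Filter.atTop Filter.atBot) :
    Filter.Tendsto (fun n : ℕ => Real.log (∑' i : ℕ, |a (n + i)|) / (n * Real.log n))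
      Filter.atTop Filter.atBot := by
  refine tendsto_atBot.2 fun b => ?_
  filter_upwards [eventually_abs_tail_le_geometric a hpos hfast (1 - b), eventually_ge_atTop 3]
    with n hbound hn
  have hs := one_le_nat_mul_log hn
  have htail : Summable fun i => |a (n + i)| := by
    simpa only [add_comm n] using (summable_nat_add_iff n).2 hsum
  have hR_pos : 0 < ∑' i, |a (n + i)| := htail.tsum_pos (fun _ => abs_nonneg _) 0 (hpos _)
  have hR_le := tsum_le_two_mul_of_le_geometric htail hbound
  have hlog := log_le_log hR_pos hR_le
  rw [log_mul two_ne_zero (exp_pos _).ne', log_exp] at hlog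
  rw [div_le_iff₀ (by linarith)]
  linarith [log_two_lt_d9]
end

section
/- Let K ⊆ [0,1] be a set covered by M open intervals I₀, …, I_{M−1} ⊆ [0,1], each of length at most 2ε. Then for each positive integer i, the i-fold Minkowski product K^{⊙i} can be covered by at most C(i+M−1, M−1) intervals, each of length at most 2iε. -/
open Pointwise

lemma aux_mul_subset_Icc {A B : Set ℝ} (hA : A ⊆ Set.Icc 0 1) (hB : B ⊆ Set.Icc 0 1) :
    A * B ⊆ Set.Icc 0 1 := by
  rw [Set.mul_subset_iff]
  intro a ha b hb
  obtain ⟨ha0, ha1⟩ := hA ha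
  obtain ⟨hb0, hb1⟩ := hB hb
  exact ⟨mul_nonneg ha0 hb0, by nlinarith⟩

lemma aux_ordConnected_mul {A B : Set ℝ} (hA : A.OrdConnected) (hB : B.OrdConnected) :
    (A * B).OrdConnected := by
  have : A * B = (fun x : ℝ × ℝ => x.1 * x.2) '' A ×ˢ B := (Set.image_mul_prod).symm
  rw [this]
  exact ((hA.isPreconnected.prod hB.isPreconnected).image _
    continuous_mul.continuousOn).ordConnected

lemma aux_diam_mul {A B : Set ℝ} (hA : A ⊆ Set.Icc 0 1) (hB : B ⊆ Set.Icc 0 1) :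
    Metric.diam (A * B) ≤ Metric.diam A + Metric.diam B := by
  have hAb : Bornology.IsBounded A := (Metric.isBounded_Icc (0:ℝ) 1).subset hA
  have hBb : Bornology.IsBounded B := (Metric.isBounded_Icc (0:ℝ) 1).subset hB
  apply Metric.diam_le_of_forall_dist_le
    (add_nonneg Metric.diam_nonneg Metric.diam_nonneg)
  rintro x ⟨a, ha, b, hb, rfl⟩ y ⟨a', ha', b', hb', rfl⟩
  obtain ⟨ha0, ha1⟩ := hA ha; obtain ⟨hb0, hb1⟩ := hB hb
  obtain ⟨ha0', ha1'⟩ := hA ha'; obtain ⟨hb0', hb1'⟩ := hB hb'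
  have h1 : dist a a' ≤ Metric.diam A := Metric.dist_le_diam_of_mem hAb ha ha'
  have h2 : dist b b' ≤ Metric.diam B := Metric.dist_le_diam_of_mem hBb hb hb'
  rw [Real.dist_eq] at *
  have : |a * b - a' * b'| ≤ |a - a'| * |b| + |a'| * |b - b'| := by
    calc |a * b - a' * b'| = |(a - a') * b + a' * (b - b')| := by ring_nf
    _ ≤ |(a - a') * b| + |a' * (b - b')| := abs_add_le _ _
    _ = |a - a'| * |b| + |a'| * |b - b'| := by rw [abs_mul, abs_mul]
  have hb' : |b| ≤ 1 := abs_le.2 ⟨by linarith, hb1⟩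
  have ha'' : |a'| ≤ 1 := abs_le.2 ⟨by linarith, ha1'⟩
  nlinarith [abs_nonneg (a - a'), abs_nonneg (b - b')]

lemma aux_prod_props {d : ℝ} (hd : 0 ≤ d) (s : Multiset (Set ℝ))
    (h : ∀ A ∈ s, A ⊆ Set.Icc 0 1 ∧ A.OrdConnected ∧ Metric.diam A ≤ d) :
    s.prod ⊆ Set.Icc 0 1 ∧ s.prod.OrdConnected ∧
      Metric.diam s.prod ≤ (s.card : ℝ) * d := by
  induction s using Multiset.induction_on with
  | empty =>
      refine ⟨?_, ?_, ?_⟩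
      · simp [Set.one_subset]
      · rw [Multiset.prod_zero, ← Set.singleton_one]; exact Set.ordConnected_singleton
      · simp
  | cons A s ih =>
      have hA := h A (Multiset.mem_cons_self _ _)
      have hs := ih (fun B hB => h B (Multiset.mem_cons_of_mem hB))
      rw [Multiset.prod_cons]
      refine ⟨aux_mul_subset_Icc hA.1 hs.1, aux_ordConnected_mul hA.2.1 hs.2.1, ?_⟩
      calc Metric.diam (A * s.prod) ≤ Metric.diam A + Metric.diam s.prod :=
            aux_diam_mul hA.1 hs.1
      _ ≤ d + (s.card : ℝ) * d := add_le_add hA.2.2 hs.2.2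
      _ = ((A ::ₘ s).card : ℝ) * d := by
          rw [Multiset.card_cons]; push_cast; ring

lemma aux_cover {K : Set ℝ} {M : ℕ} {I : Fin M → Set ℝ}
    (hcover : K ⊆ ⋃ ℓ, I ℓ) (n : ℕ) :
    K ^ n ⊆ ⋃ s : Sym (Fin M) n, ((s : Multiset (Fin M)).map I).prod := by
  induction n with
  | zero =>
      intro x hx
      refine Set.mem_iUnion.2 ⟨Sym.nil, ?_⟩
      simpa using hx
  | succ n ih =>
      rw [pow_succ]
      rintro x ⟨y, hy, z, hz, rfl⟩
      obtain ⟨s, hs⟩ := Set.mem_iUnion.1 (ih hy)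
      obtain ⟨ℓ, hℓ⟩ := Set.mem_iUnion.1 (hcover hz)
      refine Set.mem_iUnion.2 ⟨ℓ ::ₛ s, ?_⟩
      have : ((↑(ℓ ::ₛ s) : Multiset (Fin M)).map I).prod
          = I ℓ * ((s : Multiset (Fin M)).map I).prod := by
        simp [Sym.cons, Multiset.map_cons, Multiset.prod_cons]
      rw [this, mul_comm]
      exact Set.mul_mem_mul hs hℓ

theorem cover_minkowski_pow (K : Set ℝ) (hK : K ⊆ Set.Icc 0 1)
    (M : ℕ) (hM : 1 ≤ M) (ε : ℝ) (hε : 0 ≤ ε) (I : Fin M → Set ℝ)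
    (hIopen : ∀ ℓ, IsOpen (I ℓ)) (hIint : ∀ ℓ, (I ℓ).OrdConnected)
    (hIsub : ∀ ℓ, I ℓ ⊆ Set.Icc 0 1) (hIdiam : ∀ ℓ, Metric.diam (I ℓ) ≤ 2 * ε)
    (hcover : K ⊆ ⋃ ℓ, I ℓ) (i : ℕ) (hi : 1 ≤ i) :
    ∃ 𝒥 : Finset (Set ℝ), 𝒥.card ≤ Nat.choose (i + M - 1) (M - 1) ∧
      (∀ J ∈ 𝒥, J.OrdConnected ∧ Bornology.IsBounded J ∧ Metric.diam J ≤ 2 * i * ε) ∧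
      K ^ i ⊆ ⋃ J ∈ 𝒥, J := by
  classical
  refine ⟨Finset.image (fun s : Sym (Fin M) i => ((s : Multiset (Fin M)).map I).prod)
    Finset.univ, ?_, ?_, ?_⟩
  · calc _ ≤ (Finset.univ : Finset (Sym (Fin M) i)).card := Finset.card_image_le
    _ = (M + i - 1).choose i := by
        rw [Finset.card_univ, Sym.card_sym_eq_choose, Fintype.card_fin]
    _ = (i + M - 1).choose (M - 1) := by
        have h1 : M - 1 = (i + M - 1) - i := by omega
        rw [h1, Nat.choose_symm (by omega), Nat.add_comm]
  · intro J hJ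
    obtain ⟨s, _, rfl⟩ := Finset.mem_image.1 hJ
    have hprops := aux_prod_props (by linarith : (0:ℝ) ≤ 2 * ε)
      ((s : Multiset (Fin M)).map I) ?_
    · refine ⟨hprops.2.1, (Metric.isBounded_Icc (0:ℝ) 1).subset hprops.1, ?_⟩
      have hcard : ((s : Multiset (Fin M)).map I).card = i := by
        simp
      calc Metric.diam _ ≤ (((s : Multiset (Fin M)).map I).card : ℝ) * (2 * ε) :=
            hprops.2.2
        _ = 2 * i * ε := by rw [hcard]; ring
    · intro A hA
      obtain ⟨ℓ, _, rfl⟩ := Multiset.mem_map.1 hA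
      exact ⟨hIsub ℓ, hIint ℓ, hIdiam ℓ⟩
  · intro x hx
    obtain ⟨s, hs⟩ := Set.mem_iUnion.1 (aux_cover hcover i hx)
    exact Set.mem_biUnion (Finset.mem_image_of_mem _ (Finset.mem_univ s)) hs
end

section
/- For any 0 < λ < 1, the power series f(x) = Σ_{i≥0} λⁱxⁱ converges absolutely on [0,1], and the set of nonempty compact sets K ⊆ [0,1] for which f(K) = Σᵢ λⁱ·K^{⊙i} has empty interior is meager in 𝒦([0,1]). -/
/-!
If `K ⊆ [0,1]` contains points `α < β` and is `δ`-dense in `[α, β]` with `δ` small compared to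
`β - α`, then with `q = λβ` the interval `I = [α/(1-q), β/(1-q)]` satisfies `I ⊆ K + q • I`
(a greedy digit choice), so every point of `I` is a sum `∑ qʲ kⱼ` with `kⱼ ∈ K`. As
`λ (λβ)ʲ kⱼ = λʲ⁺¹ βʲ kⱼ ∈ λʲ⁺¹ • Kʲ⁺¹`, the interval `1 + λ • I` lies in the Hausdorff limit of
the partial sums, which therefore has interior. Being `δ`-dense in a long enough interval is an
open condition on `K`, and a dense one, since adjoining a short interval to `K` moves it little.
-/

open Pointwise

open Set Filter Topology Metric TopologicalSpace

theorem Set.subset_sum_pow_smul_add {R M : Type*} [Monoid R] [AddCommMonoid M]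
    [DistribMulAction R M] {I K : Set M} {q : R} (h : I ⊆ K + q • I) (n : ℕ) :
    I ⊆ (∑ j ∈ Finset.range n, q ^ j • K) + q ^ n • I := by
  induction n with
  | zero => simp
  | succ n ih =>
    calc I ⊆ (∑ j ∈ Finset.range n, q ^ j • K) + q ^ n • I := ih
      _ ⊆ (∑ j ∈ Finset.range n, q ^ j • K) + q ^ n • (K + q • I) :=
        add_subset_add_left (smul_set_mono h)
      _ = (∑ j ∈ Finset.range (n + 1), q ^ j • K) + q ^ (n + 1) • I := by
        rw [smul_add, smul_smul, ← pow_succ, Finset.sum_range_succ, add_assoc]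

theorem Icc_subset_add_smul_Icc {K : Set ℝ} {α β δ q : ℝ} (hα : α ∈ K) (hβ : β ∈ K)
    (hq₀ : 0 < q) (hq₁ : q < 1) (hK : ∀ x ∈ Icc α β, ∃ k ∈ K, dist x k ≤ δ)
    (hδ : 2 * δ * (1 - q) ≤ q * (β - α)) :
    Icc (α / (1 - q)) (β / (1 - q)) ⊆ K + q • Icc (α / (1 - q)) (β / (1 - q)) := by
  intro r ⟨hCr, hrD⟩
  set C := α / (1 - q)
  set D := β / (1 - q)
  have hq : 1 - q ≠ 0 := by linarith
  have hC : C - q * C = α := by linear_combination div_mul_cancel₀ α hq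
  have hD : D - q * D = β := by linear_combination div_mul_cancel₀ β hq
  have hgap : 2 * δ ≤ q * D - q * C := by
    rw [show q * D - q * C = q * (β - α) / (1 - q) by ring, le_div_iff₀ (by linarith)]
    exact hδ
  suffices ∃ k ∈ K, r - q * D ≤ k ∧ k ≤ r - q * C by
    obtain ⟨k, hk, hlo, hhi⟩ := this
    refine ⟨k, hk, r - k, ?_, add_sub_cancel _ _⟩
    rw [LinearOrderedField.smul_Icc hq₀]
    constructor <;> linarith
  -- the window `[r - q D, r - q C]` for `k` has length at least `2 δ` and meets `[α, β]`
  set x := r - (q * C + q * D) / 2 with hx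
  by_cases hxα : x < α
  · exact ⟨α, hα, by linarith, by linarith⟩
  by_cases hxβ : β < x
  · exact ⟨β, hβ, by linarith, by linarith⟩
  obtain ⟨k, hk, hxk⟩ := hK x ⟨not_lt.1 hxα, not_lt.1 hxβ⟩
  rw [Real.dist_eq, abs_le] at hxk
  exact ⟨k, hk, by linarith, by linarith⟩

theorem mem_of_tendsto_hausdorffDist_s18 {X ι : Type*} [PseudoMetricSpace X] {l : Filter ι} [l.NeBot]
    {S : ι → Set X} {F : Set X} {t : X} (hS : ∀ i, (S i).Nonempty)
    (hSb : ∀ i, Bornology.IsBounded (S i)) (hFc : IsClosed F) (hFb : Bornology.IsBounded F)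
    (hF : F.Nonempty) (hSF : Tendsto (fun i => hausdorffDist (S i) F) l (𝓝 0))
    (ht : Tendsto (fun i => infDist t (S i)) l (𝓝 0)) : t ∈ F := by
  rw [hFc.mem_iff_infDist_zero hF]
  refine le_antisymm ?_ infDist_nonneg
  have := ht.add hSF
  rw [add_zero] at this
  exact ge_of_tendsto' this fun i => infDist_le_infDist_add_hausdorffDist
    (hausdorffEDist_ne_top_of_nonempty_of_bounded (hS i) hF (hSb i) hFb)

theorem isCompact_pow {M : Type*} [Monoid M] [TopologicalSpace M] [ContinuousMul M] {K : Set M}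
    (hK : IsCompact K) (n : ℕ) : IsCompact (K ^ n) := by
  induction n with
  | zero => simp
  | succ n ih => rw [pow_succ]; exact ih.mul hK

theorem isCompact_finsetSum {ι M : Type*} [AddCommMonoid M] [TopologicalSpace M] [ContinuousAdd M]
    (s : Finset ι) {f : ι → Set M} (hf : ∀ i ∈ s, IsCompact (f i)) : IsCompact (∑ i ∈ s, f i) :=
  Finset.sum_induction f IsCompact (fun _ _ => IsCompact.add) (by simp) hf

theorem one_add_smul_sum_subset_sum_pow_smul_pow {R : Type*} [CommSemiring R] {K : Set R}
    {c β : R} (hβ : β ∈ K) (n : ℕ) :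
    1 + c • ∑ j ∈ Finset.range n, (c * β) ^ j • K ⊆ ∑ i ∈ Finset.range (n + 1), c ^ i • K ^ i := by
  rw [Finset.sum_range_succ', Finset.smul_sum, pow_zero, pow_zero, one_smul, add_comm]
  refine add_subset_add_right (Set.finsetSum_subset_finsetSum _ _ _ fun j _ => ?_)
  rw [smul_smul, show c * (c * β) ^ j = c ^ (j + 1) * β ^ j by ring, mul_smul, pow_succ K]
  exact smul_set_mono (smul_set_subset_mul (pow_mem_pow hβ))

theorem exists_mem_sum_pow_smul_pow_dist_le {K : Set ℝ} {lam α β δ t : ℝ} (hK : K ⊆ Icc 0 1)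
    (hlam₀ : 0 < lam) (hlam₁ : lam < 1) (hα : α ∈ K) (hβ : β ∈ K) (hαβ : α < β)
    (hKδ : ∀ x ∈ Icc α β, ∃ k ∈ K, dist x k ≤ δ)
    (hδ : 2 * δ * (1 - lam * β) ≤ lam * β * (β - α))
    (ht : t ∈ Icc (1 + lam * (α / (1 - lam * β))) (1 + lam * (β / (1 - lam * β)))) (n : ℕ) :
    ∃ y ∈ ∑ i ∈ Finset.range (n + 1), lam ^ i • K ^ i,
      dist t y ≤ lam * (lam * β) ^ n * (β / (1 - lam * β)) := by
  set q := lam * β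
  have hα₀ : 0 ≤ α := (hK hα).1
  have hq₀ : 0 < q := mul_pos hlam₀ (hα₀.trans_lt hαβ)
  have hq₁ : q < 1 := by nlinarith [(hK hβ).2]
  have hs : (t - 1) / lam ∈ Icc (α / (1 - q)) (β / (1 - q)) := by
    constructor
    · rw [le_div_iff₀ hlam₀]; linarith [ht.1]
    · rw [div_le_iff₀ hlam₀]; linarith [ht.2]
  obtain ⟨y, hy, z, ⟨w, ⟨hCw, hwD⟩, rfl⟩, hyz⟩ :=
    Set.subset_sum_pow_smul_add (Icc_subset_add_smul_Icc hα hβ hq₀ hq₁ hKδ hδ) n hs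
  refine ⟨1 + lam * y, one_add_smul_sum_subset_sum_pow_smul_pow hβ n
    (add_mem_add rfl (smul_mem_smul_set hy)), ?_⟩
  have hty : t = 1 + lam * y + lam * (q ^ n * w) := by
    simp only [smul_eq_mul] at hyz
    rw [eq_div_iff hlam₀.ne'] at hyz
    linear_combination (-1) * hyz
  have hw₀ : 0 ≤ w := (div_nonneg hα₀ (by linarith)).trans hCw
  rw [hty, dist_eq_norm, add_sub_cancel_left, Real.norm_eq_abs, abs_of_nonneg (by positivity),
    mul_assoc]
  gcongr

theorem Icc_subset_of_tendsto_hausdorffDist {K F : Set ℝ} {lam α β δ : ℝ} (hK : K ⊆ Icc 0 1)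
    (hKc : IsCompact K) (hlam₀ : 0 < lam) (hlam₁ : lam < 1) (hα : α ∈ K) (hβ : β ∈ K)
    (hαβ : α < β) (hKδ : ∀ x ∈ Icc α β, ∃ k ∈ K, dist x k ≤ δ)
    (hδ : 2 * δ * (1 - lam * β) ≤ lam * β * (β - α)) (hFc : IsCompact F) (hF : F.Nonempty)
    (hT : Tendsto (fun n => hausdorffDist (∑ i ∈ Finset.range n, lam ^ i • K ^ i) F)
      atTop (𝓝 0)) :
    Icc (1 + lam * (α / (1 - lam * β))) (1 + lam * (β / (1 - lam * β))) ⊆ F := by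
  intro t ht
  have happrox := exists_mem_sum_pow_smul_pow_dist_le hK hlam₀ hlam₁ hα hβ hαβ hKδ hδ ht
  refine mem_of_tendsto_hausdorffDist_s18 (l := atTop)
    (S := fun n => ∑ i ∈ Finset.range (n + 1), lam ^ i • K ^ i)
    (fun n => (happrox n).elim fun y hy => ⟨y, hy.1⟩)
    (fun n => (isCompact_finsetSum _ fun i _ => (isCompact_pow hKc i).smul _).isBounded)
    hFc.isClosed hFc.isBounded hF (hT.comp (tendsto_add_atTop_nat 1)) ?_
  have hq₀ : 0 ≤ lam * β := mul_nonneg hlam₀.le (hK hβ).1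
  have hq₁ : lam * β < 1 := by nlinarith [(hK hβ).2]
  have hlim : Tendsto (fun n : ℕ => lam * (lam * β) ^ n * (β / (1 - lam * β))) atTop (𝓝 0) := by
    simpa using ((tendsto_pow_atTop_nhds_zero_of_lt_one hq₀ hq₁).const_mul lam).mul_const _
  refine squeeze_zero (fun n => infDist_nonneg) (fun n => ?_) hlim
  obtain ⟨y, hy, hty⟩ := happrox n
  exact (infDist_le_dist_of_mem hy).trans hty

-- Points `α ≈ a`, `β ≈ b` of such an `L` satisfy the hypotheses of
-- `Icc_subset_of_tendsto_hausdorffDist`; the slack `δ'` makes the condition open.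
def nearIntervalCompacts (lam : ℝ) : Set (NonemptyCompacts ℝ) :=
  {L | ∃ a b δ δ' : ℝ, 0 < δ ∧ δ' < δ ∧ 4 * δ < b - a ∧ 2 * δ ≤ lam * (b - a - 4 * δ) ^ 2 ∧
    ∀ x ∈ Icc a b, infDist x (L : Set ℝ) ≤ δ'}

theorem isOpen_nearIntervalCompacts (lam : ℝ) : IsOpen (nearIntervalCompacts lam) := by
  rw [Metric.isOpen_iff]
  rintro L ⟨a, b, δ, δ', hδ₀, hδ', hab, hδ, hL⟩
  refine ⟨(δ - δ') / 2, by linarith, fun L' hL' => ?_⟩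
  refine ⟨a, b, δ, δ' + (δ - δ') / 2, hδ₀, by linarith, hab, hδ, fun x hx => ?_⟩
  have hLL' : infDist x (L' : Set ℝ) ≤ infDist x (L : Set ℝ) + dist L' L := by
    rw [NonemptyCompacts.dist_eq, hausdorffDist_comm]
    exact infDist_le_infDist_add_hausdorffDist (hausdorffEDist_ne_top_of_nonempty_of_bounded
      L.nonempty L'.nonempty L.isCompact.isBounded L'.isCompact.isBounded)
  linarith [hL x hx, mem_ball.1 hL']

theorem exists_nearIntervalCompacts_dist_lt {lam : ℝ} (hlam₀ : 0 < lam) (hlam₁ : lam < 1)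
    {L : NonemptyCompacts ℝ} (hL : (L : Set ℝ) ⊆ Icc 0 1) {ε : ℝ} (hε : 0 < ε) :
    ∃ L' ∈ nearIntervalCompacts lam, (L' : Set ℝ) ⊆ Icc 0 1 ∧ dist L L' < ε := by
  obtain ⟨p, hp⟩ := L.nonempty
  set ρ := min (ε / 2) 1
  have hρ₀ : 0 < ρ := by positivity
  have hρ₁ : ρ ≤ 1 := min_le_right _ _
  set c := min p (1 - ρ)
  have hpJ : p ∈ Icc c (c + ρ) := ⟨min_le_left _ _, by grind⟩
  let J : NonemptyCompacts ℝ := ⟨⟨Icc c (c + ρ), isCompact_Icc⟩, ⟨p, hpJ⟩⟩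
  have hLJ : ((L ⊔ J : NonemptyCompacts ℝ) : Set ℝ) = (L : Set ℝ) ∪ Icc c (c + ρ) :=
    NonemptyCompacts.coe_sup _ _
  have hlamρ : lam * ρ ≤ 1 := by nlinarith
  refine ⟨L ⊔ J, ⟨c, c + ρ, lam * ρ ^ 2 / 8, 0, by positivity, by positivity, by nlinarith, ?_,
    fun x hx => (infDist_zero_of_mem (hLJ ▸ Or.inr hx)).le⟩, ?_, ?_⟩
  · have : ρ / 2 ≤ c + ρ - c - 4 * (lam * ρ ^ 2 / 8) := by nlinarith
    nlinarith [mul_le_mul this this (by positivity) (by linarith)]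
  · rw [hLJ]
    exact union_subset hL (Icc_subset_Icc (le_min (hL hp).1 (by linarith)) (by grind))
  · rw [NonemptyCompacts.dist_eq, hLJ]
    refine (hausdorffDist_le_of_mem_dist hρ₀.le (fun x hx => ⟨x, Or.inl hx, by simpa using hρ₀.le⟩)
      ?_).trans_lt (by grind)
    rintro x (hx | hx)
    · exact ⟨x, hx, by simpa using hρ₀.le⟩
    · refine ⟨p, hp, ?_⟩
      rw [Real.dist_eq, abs_le]
      constructor <;> linarith [hx.1, hx.2, hpJ.1, hpJ.2]

theorem nonempty_interior_of_tendsto_hausdorffDist {lam : ℝ} (hlam₀ : 0 < lam) (hlam₁ : lam < 1)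
    {K : NonemptyCompacts ℝ} (hK : (K : Set ℝ) ⊆ Icc 0 1) (hKV : K ∈ nearIntervalCompacts lam)
    {F : Set ℝ} (hFc : IsCompact F) (hF : F.Nonempty)
    (hT : Tendsto (fun n => hausdorffDist (∑ i ∈ Finset.range n, lam ^ i • (K : Set ℝ) ^ i) F)
      atTop (𝓝 0)) :
    (interior F).Nonempty := by
  obtain ⟨a, b, δ, δ', hδ₀, hδ', hab, hδ, hKab⟩ := hKV
  have hnear : ∀ x ∈ Icc a b, ∃ k ∈ (K : Set ℝ), dist x k ≤ δ := fun x hx =>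
    let ⟨k, hk, hxk⟩ := (infDist_lt_iff K.nonempty).1 ((hKab x hx).trans_lt hδ')
    ⟨k, hk, hxk.le⟩
  obtain ⟨α, hα, hαd⟩ := hnear (a + δ) ⟨by linarith, by linarith⟩
  obtain ⟨β, hβ, hβd⟩ := hnear (b - δ) ⟨by linarith, by linarith⟩
  rw [Real.dist_eq, abs_le] at hαd hβd
  have hαβ : b - a - 4 * δ ≤ β - α := by linarith
  have hα₀ := (hK hα).1
  have hβα : 0 ≤ β - α := by linarith
  have hgap : 2 * δ * (1 - lam * β) ≤ lam * β * (β - α) :=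
    calc 2 * δ * (1 - lam * β) ≤ 2 * δ := by nlinarith [mul_nonneg hlam₀.le (hK hβ).1]
      _ ≤ lam * (b - a - 4 * δ) ^ 2 := hδ
      _ ≤ lam * (β - α) * (β - α) := by rw [mul_assoc, ← sq]; gcongr
      _ ≤ lam * β * (β - α) := by gcongr; linarith
  have hKδ : ∀ x ∈ Icc α β, ∃ k ∈ (K : Set ℝ), dist x k ≤ δ := fun x hx =>
    hnear x ⟨by linarith [hx.1], by linarith [hx.2]⟩
  have hsub := Icc_subset_of_tendsto_hausdorffDist hK K.isCompact hlam₀ hlam₁ hα hβ (by linarith)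
    hKδ hgap hFc hF hT
  refine Nonempty.mono (interior_mono hsub) ?_
  rw [interior_Icc, nonempty_Ioo]
  have : lam * β < 1 := by nlinarith [(hK hβ).2]
  gcongr
  linarith

theorem summable_abs_pow_mul_pow {lam x : ℝ} (h : |lam * x| < 1) :
    Summable fun i : ℕ => |lam ^ i * x ^ i| := by
  simpa [← mul_pow, abs_pow] using summable_geometric_of_lt_one (abs_nonneg _) h

theorem dense_nearIntervalCompacts {lam : ℝ} (hlam₀ : 0 < lam) (hlam₁ : lam < 1) :
    Dense (Subtype.val ⁻¹' nearIntervalCompacts lam : Set KIcc) := by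
  change Dense (Subtype.val ⁻¹' nearIntervalCompacts lam :
    Set ({K : NonemptyCompacts ℝ | (K : Set ℝ) ⊆ Icc 0 1} : Set _))
  refine Subtype.dense_iff.2 fun L hL => ?_
  rw [Subtype.image_preimage_coe, Metric.mem_closure_iff]
  intro ε hε
  obtain ⟨L', hL'V, hL', hLL'⟩ := exists_nearIntervalCompacts_dist_lt hlam₀ hlam₁ hL hε
  exact ⟨L', ⟨hL', hL'V⟩, hLL'⟩

theorem geometric_series_meager (lam : ℝ) (h0 : 0 < lam) (h1 : lam < 1) :
    (∀ x ∈ Set.Icc (0 : ℝ) 1, Summable (fun i : ℕ => |lam ^ i * x ^ i|)) ∧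
    IsMeagre {K : KIcc |
      ∃ F : Set ℝ, IsCompact F ∧ F.Nonempty ∧
        Filter.Tendsto
          (fun n => Metric.hausdorffDist
            (∑ i ∈ Finset.range n, lam ^ i • ((K.1 : Set ℝ) ^ i)) F)
          Filter.atTop (nhds 0) ∧
        interior F = ∅} := by
  refine ⟨fun x hx => summable_abs_pow_mul_pow ?_, ?_⟩
  · rw [abs_of_nonneg (mul_nonneg h0.le hx.1)]
    nlinarith [hx.2]
  have hV : IsMeagre (Subtype.val ⁻¹' nearIntervalCompacts lam : Set KIcc)ᶜ := by
    rw [IsMeagre, compl_compl]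
    exact residual_of_dense_open ((isOpen_nearIntervalCompacts lam).preimage continuous_subtype_val)
      (dense_nearIntervalCompacts h0 h1)
  refine hV.mono ?_
  rintro K ⟨F, hFc, hF, hT, hFi⟩ hKV
  simpa [hFi] using nonempty_interior_of_tendsto_hausdorffDist h0 h1 K.2 hKV hFc hF hT
end
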